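/- arXiv:1106.2576 — 6 statements merged into one kernel-verified Lean document; each statement's English description precedes it below -/
import Mathlib

section
/- Let h_1 = Σ_{i=1}^t (s_i - 1) + (t-2) and h_2 = Σ_{1≤i<j≤t}(s_i-1)(s_j-1) + (t-2)Σ_{i=1}^t(s_i-1) + C(t-1,2), where s_1,...,s_t are positive integers and t ≥ 2. Then (1, h_1, h_2) is a pure O-sequence; explicitly, there is a pure order ideal whose degree-1 part consists of h_1 variables and whose degree-2 part has exactly h_2 monomials. -/
/-
A sequence `(1, n, k)` with `k = 0` or `n ≤ 2k ≤ n(n+1)` is a pure O-sequence: cover the `n`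
variables by `⌈n/2⌉ ≤ k` quadratic monomials (products of disjoint pairs, plus one square when `n`
is odd), add further quadratic monomials in the same variables until there are `k` of them (there
are `C(n+1, 2)` in all), and take the order ideal they generate, whose maximal elements are exactly
these `k` monomials.

With `a_i = s_i - 1` and `u = t - 2`, the numbers of the theorem satisfy
`h₂ + ∑ C(a_i + 1, 2) = C(h₁ + 1, 2)`: the quadratic part of the paper's witness consists of all
quadratic monomials in the `h₁` variables except those inside a single block `Ẽ_i`. This gives
`2 h₂ ≤ h₁ (h₁ + 1)`. Moreover `h₁ ≤ 2 h₂` unless `h₂ = 0`: for `t ≥ 3` because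
`2 h₂ ≥ 2u ∑ a_i + u (u + 1)`, and for `t = 2` because then `h₂ = a₁ a₂`.
-/

open Finset

/-- The degree of a monomial, encoded as a finitely supported exponent vector. -/
def mdeg (m : ℕ →₀ ℕ) : ℕ := m.sum fun _ e => e

/-- An order ideal: a set of monomials closed under divisibility. -/
def IsOrderIdeal (O : Set (ℕ →₀ ℕ)) : Prop := ∀ m ∈ O, ∀ n : ℕ →₀ ℕ, n ≤ m → n ∈ O

/-- `h` is a pure `O`-sequence: it is the degree-count vector of a finite nonempty
order ideal all of whose maximal monomials have the same degree. -/
def IsPureOSeq (h : ℕ → ℤ) : Prop :=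
  ∃ O : Set (ℕ →₀ ℕ), O.Finite ∧ O.Nonempty ∧ IsOrderIdeal O ∧
    (∃ D : ℕ, ∀ m ∈ O, (∀ n ∈ O, m ≤ n → n = m) → mdeg m = D) ∧
    ∀ i : ℕ, h i = ({m ∈ O | mdeg m = i}).ncard

lemma mdeg_eq_degree (m : ℕ →₀ ℕ) : mdeg m = m.degree := rfl

namespace Finsupp

variable {σ : Type*}

lemma eq_of_le_of_degree_eq {f g : σ →₀ ℕ} (hfg : f ≤ g) (h : f.degree = g.degree) : f = g := by
  obtain ⟨c, rfl⟩ := le_iff_exists_add.mp hfg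
  rw [map_add, left_eq_add, degree_eq_zero_iff] at h
  rw [h, add_zero]

end Finsupp

namespace Finset

variable {σ : Type*} [DecidableEq σ]

lemma mem_finsuppAntidiag_iff_degree {s : Finset σ} {n : ℕ} {f : σ →₀ ℕ} :
    f ∈ s.finsuppAntidiag n ↔ f.degree = n ∧ f.support ⊆ s := by
  rw [mem_finsuppAntidiag, and_congr_left_iff]
  intro hf
  rw [Finsupp.degree_apply,
    sum_subset hf fun i _ hi => Finsupp.notMem_support_iff.mp hi]

lemma mem_finsuppAntidiag_one {s : Finset σ} {f : σ →₀ ℕ} :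
    f ∈ s.finsuppAntidiag 1 ↔ ∃ v ∈ s, f = Finsupp.single v 1 := by
  rw [mem_finsuppAntidiag_iff_degree]
  constructor
  · rintro ⟨hf, hs⟩
    obtain ⟨v, rfl⟩ : f ∈ Set.range (Finsupp.single · 1) := by
      rwa [Finsupp.range_single_one]
    exact ⟨v, hs (by simp), rfl⟩
  · rintro ⟨v, hv, rfl⟩
    simpa using hv

end Finset

open Finsupp

section LowerClosure

variable {σ : Type*} [DecidableEq σ] {s : Finset σ} {D : ℕ} {G : Finset (σ →₀ ℕ)}

lemma sep_lowerClosure_degree_eq (hG : G.Nonempty) (hGD : G ⊆ s.finsuppAntidiag D)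
    (hcover : ∀ i ∈ Set.Ioo 0 D, ∀ m ∈ s.finsuppAntidiag i, ∃ g ∈ G, m ≤ g) (i : ℕ) :
    {m ∈ (lowerClosure (G : Set (σ →₀ ℕ)) : Set (σ →₀ ℕ)) | m.degree = i} =
      ↑(if i < D then s.finsuppAntidiag i else if i = D then G else ∅) := by
  ext m
  simp only [Set.mem_ofPred_eq, SetLike.mem_coe, mem_lowerClosure]
  have hdeg : ∀ g ∈ G, g.degree = D := fun g hg =>
    (mem_finsuppAntidiag_iff_degree.mp (hGD hg)).1
  split_ifs with hlt heq
  · constructor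
    · rintro ⟨⟨g, hg, hmg⟩, rfl⟩
      exact mem_finsuppAntidiag_iff_degree.mpr
        ⟨rfl, (support_mono hmg).trans (mem_finsuppAntidiag_iff_degree.mp (hGD hg)).2⟩
    · intro hm
      refine ⟨?_, (mem_finsuppAntidiag_iff_degree.mp hm).1⟩
      rcases i.eq_zero_or_pos with rfl | hi
      · obtain ⟨g, hg⟩ := hG
        exact ⟨g, hg, by simp_all⟩
      · exact hcover i ⟨hi, hlt⟩ m hm
  · subst heq
    constructor
    · rintro ⟨⟨g, hg, hmg⟩, hm⟩
      rwa [eq_of_le_of_degree_eq hmg (hm.trans (hdeg g hg).symm)]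
    · exact fun hm => ⟨⟨m, hm, le_rfl⟩, hdeg m hm⟩
  · simp only [notMem_empty, iff_false, not_and]
    rintro ⟨g, hg, hmg⟩ rfl
    have := degree_mono hmg
    rw [hdeg g hg] at this
    omega

end LowerClosure

lemma isPureOSeq_of_subset_finsuppAntidiag {s : Finset ℕ} {D : ℕ} {G : Finset (ℕ →₀ ℕ)}
    (hG : G.Nonempty) (hGD : G ⊆ s.finsuppAntidiag D)
    (hcover : ∀ i ∈ Set.Ioo 0 D, ∀ m ∈ s.finsuppAntidiag i, ∃ g ∈ G, m ≤ g) {h : ℕ → ℤ}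
    (hh : ∀ i, h i = #(if i < D then s.finsuppAntidiag i else if i = D then G else ∅)) :
    IsPureOSeq h := by
  set O : Set (ℕ →₀ ℕ) := ↑(lowerClosure (G : Set (ℕ →₀ ℕ)))
  refine ⟨O, G.finite_toSet.lowerClosure, hG.to_set.mono subset_lowerClosure,
    fun m hm n hnm => (lowerClosure _).lower hnm hm, ⟨D, ?_⟩, fun i => ?_⟩
  · intro m hm hmax
    obtain ⟨g, hg, hmg⟩ := mem_lowerClosure.mp hm
    rw [← hmax g (subset_lowerClosure hg) hmg]
    exact (mem_finsuppAntidiag_iff_degree.mp (hGD hg)).1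
  · simp only [hh, mdeg_eq_degree, O, sep_lowerClosure_degree_eq hG hGD hcover, Set.ncard_coe_finset]

lemma exists_subset_finsuppAntidiag_two {n k : ℕ} (hnk : n ≤ 2 * k)
    (hkn : k ≤ (n + 1).choose 2) :
    ∃ E ⊆ (range n).finsuppAntidiag 2, #E = k ∧ ∀ v < n, ∃ e ∈ E, single v 1 ≤ e := by
  -- the products `x_{2i} x_{2i+1}`, and `x_{n-1}^2` when `n` is odd, cover all variables
  set pair : ℕ → ℕ →₀ ℕ := fun i => single (2 * i) 1 + single (min (2 * i + 1) (n - 1)) 1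
  set M := (range ((n + 1) / 2)).image pair
  have hM : M ⊆ (range n).finsuppAntidiag 2 := by
    simp only [M, image_subset_iff, mem_range, mem_finsuppAntidiag_iff_degree]
    intro i hi
    refine ⟨by simp [pair], (support_add).trans (union_subset ?_ ?_)⟩ <;>
      exact (support_single_subset).trans (by simp; omega)
  have hMcover : ∀ v < n, ∃ e ∈ M, single v 1 ≤ e := by
    intro v hv
    obtain ⟨j, rfl | rfl⟩ := Nat.even_or_odd' v
    · exact ⟨pair j, mem_image_of_mem _ (by simp; omega), le_add_right le_rfl⟩
    · refine ⟨pair j, mem_image_of_mem _ (by simp; omega), ?_⟩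
      simp only [pair, show min (2 * j + 1) (n - 1) = 2 * j + 1 by omega]
      exact le_add_left le_rfl
  obtain ⟨E, hME, hEA, hE⟩ := exists_subsuperset_card_eq (n := k) hM
    (card_image_le.trans (by rw [card_range]; omega))
    (by simpa [card_finsuppAntidiag_nat_eq_choose] using hkn)
  exact ⟨E, hEA, hE, fun v hv => (hMcover v hv).imp fun e he => ⟨hME he.1, he.2⟩⟩

theorem isPureOSeq_one_of_le {n k : ℕ} (hk : k = 0 ∨ n ≤ 2 * k ∧ k ≤ (n + 1).choose 2) :
    IsPureOSeq (fun j => if j = 0 then 1 else if j = 1 then (n : ℤ)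
      else if j = 2 then (k : ℤ) else 0) := by
  by_cases hk0 : k = 0
  · subst hk0
    rcases n.eq_zero_or_pos with rfl | hn
    · refine isPureOSeq_of_subset_finsuppAntidiag (s := range 0) (D := 0) (by simp) subset_rfl
        (by simp) fun i => ?_
      rcases i with _ | i <;> simp
    · refine isPureOSeq_of_subset_finsuppAntidiag (s := range n) (D := 1)
        ⟨single 0 1, mem_finsuppAntidiag_one.mpr ⟨0, by simpa using hn, rfl⟩⟩ subset_rfl
        (fun i hi => absurd hi.2 (not_lt.mpr hi.1)) fun i => ?_
      rcases i with _ | _ | i <;> simp [card_finsuppAntidiag_nat_eq_choose]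
  · obtain ⟨hnk, hkn⟩ := hk.resolve_left hk0
    obtain ⟨E, hEA, hE, hEcover⟩ := exists_subset_finsuppAntidiag_two hnk hkn
    refine isPureOSeq_of_subset_finsuppAntidiag (s := range n) (D := 2)
      (card_pos.mp (by omega)) hEA ?_ fun i => ?_
    · rintro i ⟨hi0, hi2⟩ m hm
      obtain rfl : i = 1 := by omega
      obtain ⟨v, hv, rfl⟩ := mem_finsuppAntidiag_one.mp hm
      exact hEcover v (mem_range.mp hv)
    · rcases i with _ | _ | _ | i <;> simp [card_finsuppAntidiag_nat_eq_choose, hE]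

lemma sq_sum_eq_two_mul_sum_lt_add_sum_sq {ι R : Type*} [Fintype ι] [LinearOrder ι]
    [CommSemiring R] (a : ι → R) :
    (∑ i, a i) ^ 2 = 2 * ∑ p ∈ univ.filter (fun p : ι × ι => p.1 < p.2), a p.1 * a p.2
      + ∑ i, a i ^ 2 := by
  have hsplit : ∀ i j, a i * a j = (if i < j then a i * a j else 0)
      + (if j < i then a j * a i else 0) + (if i = j then a i ^ 2 else 0) := by
    intro i j
    rcases lt_trichotomy i j with h | rfl | h
    · simp [h, h.not_gt, h.ne]
    · simp [sq]
    · rw [if_neg h.not_gt, if_pos h, if_neg h.ne', mul_comm]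
      simp
  rw [sq, sum_mul_sum, sum_filter, Fintype.sum_prod_type,
    sum_congr rfl fun i _ => sum_congr rfl fun j _ => hsplit i j]
  simp only [sum_add_distrib]
  rw [sum_comm (f := fun i j => if j < i then a j * a i else 0)]
  simp [two_mul]

lemma two_mul_choose_two_succ (m : ℕ) : 2 * (m + 1).choose 2 = (m + 1) * m := by
  rw [mul_comm, ← Nat.add_one_mul_choose_eq, Nat.choose_one_right]

lemma sum_pairs_add_sum_choose_two_eq {ι : Type*} [Fintype ι] [LinearOrder ι]
    (a : ι → ℕ) (u : ℕ) :
    (∑ p ∈ univ.filter (fun p : ι × ι => p.1 < p.2), a p.1 * a p.2 + u * ∑ i, a i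
      + (u + 1).choose 2) + ∑ i, (a i + 1).choose 2 = (∑ i, a i + u + 1).choose 2 := by
  apply Nat.eq_of_mul_eq_mul_left two_pos
  have hsq := sq_sum_eq_two_mul_sum_lt_add_sum_sq a
  have hdiag : ∑ i, (a i + 1) * a i = ∑ i, a i ^ 2 + ∑ i, a i := by
    rw [← sum_add_distrib]
    exact sum_congr rfl fun i _ => by ring
  rw [mul_add, Finset.mul_sum univ (fun i => (a i + 1).choose 2)]
  simp only [two_mul_choose_two_succ]
  linarith [two_mul_choose_two_succ u]

lemma sum_pairs_eq_zero_or_le_two_mul (u : ℕ) (a : Fin (u + 2) → ℕ) :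
    ∑ p ∈ univ.filter (fun p : Fin (u + 2) × Fin (u + 2) => p.1 < p.2), a p.1 * a p.2
      + u * ∑ i, a i + (u + 1).choose 2 = 0 ∨
    ∑ i, a i + u ≤ 2 * (∑ p ∈ univ.filter (fun p : Fin (u + 2) × Fin (u + 2) => p.1 < p.2),
      a p.1 * a p.2 + u * ∑ i, a i + (u + 1).choose 2) := by
  rcases u with _ | u
  · have hsq := sq_sum_eq_two_mul_sum_lt_add_sum_sq a
    set e := ∑ p ∈ univ.filter (fun p : Fin 2 × Fin 2 => p.1 < p.2), a p.1 * a p.2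
    rw [Fin.sum_univ_two, Fin.sum_univ_two] at hsq
    have he : e = a 0 * a 1 := by nlinarith
    rw [he, Fin.sum_univ_two]
    rcases Nat.eq_zero_or_pos (a 0) with h0 | h0
    · simp [h0]
    rcases Nat.eq_zero_or_pos (a 1) with h1 | h1
    · simp [h1]
    · right
      nlinarith
  · right
    have hS : ∑ i, a i ≤ (u + 1) * ∑ i, a i := Nat.le_mul_of_pos_left _ u.succ_pos
    have hC : u + 1 ≤ 2 * (u + 1 + 1).choose 2 := by
      rw [two_mul_choose_two_succ]
      exact Nat.le_mul_of_pos_left _ (by omega)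
    omega

theorem stmt3_general {t : ℕ} (ht : 2 ≤ t) (s : Fin t → ℕ) :
    IsPureOSeq (fun j =>
      if j = 0 then 1
      else if j = 1 then ((∑ i, (s i - 1)) + (t - 2) : ℕ)
      else if j = 2 then ((∑ p ∈ Finset.univ.filter (fun p : Fin t × Fin t => p.1 < p.2), (s p.1 - 1) * (s p.2 - 1)) +
        (t - 2) * (∑ i, (s i - 1)) + Nat.choose (t - 1) 2 : ℕ)
      else 0) := by
  obtain ⟨u, rfl⟩ := Nat.exists_eq_add_of_le' ht
  have hid := sum_pairs_add_sum_choose_two_eq (fun i => s i - 1) u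
  simp only [Nat.add_sub_cancel, Nat.add_succ_sub_one]
  exact isPureOSeq_one_of_le <|
    (sum_pairs_eq_zero_or_le_two_mul u (fun i => s i - 1)).imp_right
      fun h => ⟨h, hid ▸ le_self_add⟩

theorem stmt3 {t : ℕ} (ht : 2 ≤ t) (s : Fin t → ℕ) (hs : ∀ i, 1 ≤ s i) :
    IsPureOSeq (fun j =>
      if j = 0 then 1
      else if j = 1 then ((∑ i, (s i - 1)) + (t - 2) : ℕ)
      else if j = 2 then ((∑ p ∈ Finset.univ.filter (fun p : Fin t × Fin t => p.1 < p.2), (s p.1 - 1) * (s p.2 - 1)) +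
        (t - 2) * (∑ i, (s i - 1)) + Nat.choose (t - 1) 2 : ℕ)
      else 0) :=
  stmt3_general ht s
end

section
/- The set O = {x_1^{a_1(B)} x_2^{a_2(B)} : B a basis of M} (for M a loopless rank-2 matroid with ordered parallelism classes) is closed under divisibility: if x_1^{a} x_2^{b} ∈ O with a > 0 then x_1^{a-1} x_2^{b} ∈ O, and if b > 0 then x_1^{a} x_2^{b-1} ∈ O. -/
/-!
Both exponents count elements above a chosen element of a union of consecutive parallelism
classes. Since the classes are ordered, the count above `z ∈ E k'` does not change when the
classes below `k'` are added to or removed from the union, so every value below the size of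
the union is realised by some element of it. To lower `a₁` by one, replace `x` by the element
of `E k ∪ ⋯ ∪ E (l-1)` with one fewer element above it. To lower `a₂` by one, replace `y` by
the least element `w > y` of the later classes, say `w ∈ E m`, and then choose in
`E k ∪ ⋯ ∪ E (m-1)`, which contains `x`, an element with exactly `a₁` elements above it.
-/

open Finset

/-- `a1 E k l x y` : the number of elements greater than `x` lying in the
parallelism classes `E k, ..., E (l-1)`, other than `y`. -/
def a1 {α : Type*} [LinearOrder α] [DecidableEq α] {t : ℕ} (E : Fin t → Finset α)
    (k l : Fin t) (x y : α) : ℕ :=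
  (((Finset.Ico k l).biUnion E).filter (fun v => x < v ∧ v ≠ y)).card

/-- `a2 E l y` : the number of elements greater than `y` lying in the
parallelism classes `E l, ..., E (t-1)`. -/
def a2 {α : Type*} [LinearOrder α] [DecidableEq α] {t : ℕ} (E : Fin t → Finset α)
    (l : Fin t) (y : α) : ℕ :=
  (((Finset.Ici l).biUnion E).filter (fun v => y < v)).card

section ParallelClasses

variable {α : Type*} [LinearOrder α]

lemma exists_card_filter_lt_eq (S : Finset α) : ∀ j < #S, ∃ z ∈ S, #{v ∈ S | z < v} = j := by
  induction S using Finset.induction_on_max with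
  | empty => simp
  | insert a s ha ih =>
    have has : a ∉ s := fun h => lt_irrefl a (ha a h)
    rintro (_ | j) hj
    · refine ⟨a, mem_insert_self a s, card_eq_zero.2 (filter_eq_empty_iff.2 fun v hv => ?_)⟩
      rcases mem_insert.1 hv with rfl | hv
      exacts [lt_irrefl v, (ha v hv).not_gt]
    · rw [card_insert_of_notMem has] at hj
      obtain ⟨z, hz, hcard⟩ := ih j (by omega)
      refine ⟨z, mem_insert_of_mem hz, ?_⟩
      rw [filter_insert, if_pos (ha z hz),
        card_insert_of_notMem fun h => has (mem_filter.1 h).1, hcard]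

lemma card_filter_min'_lt (W : Finset α) (hW : W.Nonempty) :
    #{v ∈ W | W.min' hW < v} = #W - 1 := by
  have : {v ∈ W | W.min' hW < v} = W.erase (W.min' hW) := by
    ext v
    simp only [mem_filter, mem_erase]
    exact ⟨fun h => ⟨h.2.ne', h.1⟩, fun h => ⟨h.2, lt_of_le_of_ne (W.min'_le v h.2) h.1.symm⟩⟩
  rw [this, card_erase_of_mem (W.min'_mem hW)]

variable {t : ℕ} (E : Fin t → Finset α)

lemma filter_lt_biUnion_eq_filter_le
    (hord : ∀ (k l : Fin t) (a b : α), a ∈ E k → b ∈ E l → k < l → a < b)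
    (s : Finset (Fin t)) {k : Fin t} {z : α} (hz : z ∈ E k) :
    {v ∈ s.biUnion E | z < v} = {v ∈ {i ∈ s | k ≤ i}.biUnion E | z < v} := by
  ext v
  simp only [mem_filter, mem_biUnion]
  constructor
  · rintro ⟨⟨i, hi, hvi⟩, hzv⟩
    exact ⟨⟨i, ⟨hi, not_lt.1 fun hik => (hord i k v z hvi hz hik).not_gt hzv⟩, hvi⟩, hzv⟩
  · rintro ⟨⟨i, ⟨hi, _⟩, hvi⟩, hzv⟩
    exact ⟨⟨i, hi, hvi⟩, hzv⟩

lemma a1_eq_card_filter (hdisj : ∀ i j : Fin t, i ≠ j → Disjoint (E i) (E j))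
    {l : Fin t} {y : α} (hy : y ∈ E l) (k : Fin t) (x : α) :
    a1 E k l x y = #{v ∈ (Ico k l).biUnion E | x < v} := by
  have hyU : y ∉ (Ico k l).biUnion E := by
    simp only [mem_biUnion, not_exists, not_and]
    intro i hi hyi
    exact disjoint_left.1 (hdisj i l (mem_Ico.1 hi).2.ne) hyi hy
  unfold a1
  congr 1
  exact filter_congr fun v hv => ⟨And.left, fun h => ⟨h, fun e => hyU (e ▸ hv)⟩⟩

lemma exists_a1_eq (hdisj : ∀ i j : Fin t, i ≠ j → Disjoint (E i) (E j))
    (hord : ∀ (k l : Fin t) (a b : α), a ∈ E k → b ∈ E l → k < l → a < b)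
    {k m : Fin t} {x : α} (hx : x ∈ E k) (hkm : k < m) {j : ℕ}
    (hj : j ≤ #{v ∈ (Ico k m).biUnion E | x < v}) :
    ∃ (k' : Fin t) (z : α), z ∈ E k' ∧ k' < m ∧ ∀ w ∈ E m, a1 E k' m z w = j := by
  have hxU : x ∈ (Ico k m).biUnion E := mem_biUnion.2 ⟨k, mem_Ico.2 ⟨le_rfl, hkm⟩, hx⟩
  have hlt : #{v ∈ (Ico k m).biUnion E | x < v} < #((Ico k m).biUnion E) :=
    card_lt_card (filter_ssubset.2 ⟨x, hxU, lt_irrefl x⟩)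
  obtain ⟨z, hzU, hz⟩ := exists_card_filter_lt_eq ((Ico k m).biUnion E) j (by omega)
  obtain ⟨k', hk', hzk'⟩ := mem_biUnion.1 hzU
  obtain ⟨hkk', hk'm⟩ := mem_Ico.1 hk'
  refine ⟨k', z, hzk', hk'm, fun w hw => ?_⟩
  rw [a1_eq_card_filter E hdisj hw, ← hz, filter_lt_biUnion_eq_filter_le E hord (Ico k m) hzk',
    Ico_filter_le, max_eq_right hkk']

lemma exists_a2_eq_sub_one
    (hord : ∀ (k l : Fin t) (a b : α), a ∈ E k → b ∈ E l → k < l → a < b)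
    {l : Fin t} {y : α} (ha2 : 0 < a2 E l y) :
    ∃ (m : Fin t) (w : α), w ∈ E m ∧ l ≤ m ∧ a2 E m w = a2 E l y - 1 := by
  set W := {v ∈ (Ici l).biUnion E | y < v}
  have hW : W.Nonempty := card_pos.1 ha2
  obtain ⟨hwU, hyw⟩ := mem_filter.1 (W.min'_mem hW)
  obtain ⟨m, hm, hwm⟩ := mem_biUnion.1 hwU
  have hlm : l ≤ m := mem_Ici.1 hm
  refine ⟨m, W.min' hW, hwm, hlm, ?_⟩
  have hIci : {i ∈ Ici l | m ≤ i} = Ici m := by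
    ext i
    simp only [mem_filter, mem_Ici]
    exact ⟨And.right, fun h => ⟨hlm.trans h, h⟩⟩
  have hfilter : {v ∈ (Ici l).biUnion E | W.min' hW < v} = {v ∈ W | W.min' hW < v} := by
    rw [filter_filter]
    exact filter_congr fun v _ => ⟨fun h => ⟨hyw.trans h, h⟩, And.right⟩
  rw [a2, ← hIci, ← filter_lt_biUnion_eq_filter_le E hord _ hwm, hfilter, card_filter_min'_lt]
  rfl

lemma isBase_pair_of_lt (M : Matroid α)
    (hpar : ∀ (i j : Fin t) (a b : α), a ∈ E i → b ∈ E j → a ≠ b →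
      (M.Indep {a, b} ↔ i ≠ j))
    (hrank : ∀ B : Set α, M.IsBase B → B.ncard = 2)
    (hord : ∀ (k l : Fin t) (a b : α), a ∈ E k → b ∈ E l → k < l → a < b)
    {i j : Fin t} {a b : α} (ha : a ∈ E i) (hb : b ∈ E j) (hij : i < j) :
    M.IsBase {a, b} := by
  have hab : a ≠ b := (hord i j a b ha hb hij).ne
  obtain ⟨B, hB, hsub⟩ := ((hpar i j a b ha hb hab).2 hij.ne).exists_isBase_superset
  have hBfin : B.Finite := Set.finite_of_ncard_ne_zero (by rw [hrank B hB]; norm_num)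
  rwa [Set.eq_of_subset_of_ncard_le hsub (by rw [hrank B hB, Set.ncard_pair hab]) hBfin]

end ParallelClasses

theorem stmt6_general {α : Type*} [LinearOrder α] {t : ℕ}
    (M : Matroid α) (E : Fin t → Finset α)
    (hdisj : ∀ i j : Fin t, i ≠ j → Disjoint (E i) (E j))
    (hpar : ∀ (i j : Fin t) (a b : α), a ∈ E i → b ∈ E j → a ≠ b →
      (M.Indep {a, b} ↔ i ≠ j))
    (hrank : ∀ B : Set α, M.IsBase B → B.ncard = 2)
    (hord : ∀ (k l : Fin t) (a b : α), a ∈ E k → b ∈ E l → k < l → a < b)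
    (k l : Fin t) (x y : α) (hx : x ∈ E k) (hy : y ∈ E l) (hkl : k < l) :
    (0 < a1 E k l x y → ∃ (k' l' : Fin t) (x' y' : α), x' ∈ E k' ∧ y' ∈ E l' ∧ k' < l' ∧
      M.IsBase {x', y'} ∧ a1 E k' l' x' y' = a1 E k l x y - 1 ∧ a2 E l' y' = a2 E l y) ∧
    (0 < a2 E l y → ∃ (k' l' : Fin t) (x' y' : α), x' ∈ E k' ∧ y' ∈ E l' ∧ k' < l' ∧
      M.IsBase {x', y'} ∧ a1 E k' l' x' y' = a1 E k l x y ∧ a2 E l' y' = a2 E l y - 1) := by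
  have ha1 := a1_eq_card_filter E hdisj hy k x
  constructor
  · intro _
    obtain ⟨k', z, hzk', hk'l, hz⟩ := exists_a1_eq E hdisj hord hx hkl (j := a1 E k l x y - 1)
      (by omega)
    exact ⟨k', l, z, y, hzk', hy, hk'l, isBase_pair_of_lt E M hpar hrank hord hzk' hy hk'l,
      hz y hy, rfl⟩
  · intro ha2
    obtain ⟨m, w, hwm, hlm, hw⟩ := exists_a2_eq_sub_one E hord ha2
    have hkm : k < m := hkl.trans_le hlm
    have hle : a1 E k l x y ≤ #{v ∈ (Ico k m).biUnion E | x < v} := by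
      rw [ha1]
      exact card_le_card (filter_subset_filter _
        (biUnion_subset_biUnion_of_subset_left E (Ico_subset_Ico_right hlm)))
    obtain ⟨k', z, hzk', hk'm, hz⟩ := exists_a1_eq E hdisj hord hx hkm hle
    exact ⟨k', m, z, w, hzk', hwm, hk'm, isBase_pair_of_lt E M hpar hrank hord hzk' hwm hk'm,
      hz w hwm, hw⟩

theorem stmt6 {α : Type*} [Fintype α] [LinearOrder α] {t : ℕ}
    (M : Matroid α) (E : Fin t → Finset α)
    (hloop : ∀ a : α, a ∈ M.E → M.Indep {a})
    (hcover : ∀ a : α, a ∈ M.E ↔ ∃ i, a ∈ E i)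
    (hdisj : ∀ i j : Fin t, i ≠ j → Disjoint (E i) (E j))
    (hne : ∀ i, (E i).Nonempty)
    (hground : ∀ (i : Fin t) (a : α), a ∈ E i → a ∈ M.E)
    (hpar : ∀ (i j : Fin t) (a b : α), a ∈ E i → b ∈ E j → a ≠ b →
      (M.Indep {a, b} ↔ i ≠ j))
    (hrank : ∀ B : Set α, M.IsBase B → B.ncard = 2)
    (hord : ∀ (k l : Fin t) (a b : α), a ∈ E k → b ∈ E l → k < l → a < b)
    (k l : Fin t) (x y : α) (hx : x ∈ E k) (hy : y ∈ E l) (hkl : k < l)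
    (hB : M.IsBase {x, y}) :
    (0 < a1 E k l x y → ∃ (k' l' : Fin t) (x' y' : α), x' ∈ E k' ∧ y' ∈ E l' ∧ k' < l' ∧
      M.IsBase {x', y'} ∧ a1 E k' l' x' y' = a1 E k l x y - 1 ∧ a2 E l' y' = a2 E l y) ∧
    (0 < a2 E l y → ∃ (k' l' : Fin t) (x' y' : α), x' ∈ E k' ∧ y' ∈ E l' ∧ k' < l' ∧
      M.IsBase {x', y'} ∧ a1 E k' l' x' y' = a1 E k l x y ∧ a2 E l' y' = a2 E l y - 1) :=
  stmt6_general M E hdisj hpar hrank hord k l x y hx hy hkl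
end

section
/- With M a loopless rank-2 matroid with ordered parallelism classes E_1,...,E_t and u_i the smallest element of E_i: for every basis B = {v_i, v_j} with v_j ∈ E_ℓ, the monomial x_1^{a_1(B)} x_2^{a_2(B)} divides x_1^{a_1(B̃)} x_2^{a_2(B̃)} where B̃ = {u_1, u_ℓ}, and deg(x_1^{a_1(B̃)} x_2^{a_2(B̃)}) = |E_1| + ... + |E_t| - 2 independently of ℓ. Consequently all maximal monomials in {x_1^{a_1(B)} x_2^{a_2(B)} : B a basis} have the same degree. -/
open Finset

open Function

/-!
Every element counted by `a1` or `a2` for a basis `{x, y}` with `y ∈ E l` is still counted for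
the basis `{u 0, u l}`, since `u 0 ≤ x` and `u l ≤ y`. For that basis the counts are all of
`E 0 ∪ ... ∪ E (l-1)` except `u 0` and all of `E l ∪ ... ∪ E (t-1)` except `u l`, which add up
to `|E| - 2` whatever `l` is. A maximal monomial equals the one it is dominated by.
-/

theorem Matroid.Indep.isBase_of_forall_ncard_eq {α : Type*} {M : Matroid α} {I : Set α}
    (hI : M.Indep I) (hI0 : I.ncard ≠ 0) (h : ∀ B, M.IsBase B → B.ncard = I.ncard) :
    M.IsBase I := by
  obtain ⟨B, hB, hIB⟩ := hI.exists_isBase_superset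
  have hBfin : B.Finite := Set.finite_of_ncard_ne_zero (h B hB ▸ hI0)
  rwa [Set.eq_of_subset_of_ncard_le hIB (h B hB).le hBfin]

namespace Finset

theorem card_filter_lt_add_one_of_isLeast {α : Type*} [LinearOrder α] {s : Finset α} {m : α}
    (hm : IsLeast (s : Set α) m) : #(s.filter (m < ·)) + 1 = #s := by
  rw [filter_congr fun v hv => (hm.2 hv).lt_iff_ne, filter_ne, card_erase_add_one (hm.1)]

theorem sum_Ico_add_sum_Ici {ι M : Type*} [LinearOrder ι] [LocallyFiniteOrderTop ι]
    [LocallyFiniteOrder ι] [AddCommMonoid M] (f : ι → M) {k l : ι} (hkl : k ≤ l) :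
    ∑ i ∈ Ico k l, f i + ∑ i ∈ Ici l, f i = ∑ i ∈ Ici k, f i := by
  rw [← sum_union (disjoint_left.2 fun i hi hi' => (mem_Ico.1 hi).2.not_ge (mem_Ici.1 hi'))]
  congr 1
  rw [← coe_inj, coe_union, coe_Ico, coe_Ici, coe_Ici, Set.Ico_union_Ici_eq_Ici hkl]

end Finset

section OrderedClasses

variable {ι α : Type*} [LinearOrder ι] [LinearOrder α] (E : ι → Finset α)

def ClassesOrdered : Prop :=
  ∀ (k l : ι) (a b : α), a ∈ E k → b ∈ E l → k < l → a < b

variable {E}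

theorem ClassesOrdered.le_of_mem {k i : ι} {u x : α} (hord : ClassesOrdered E) (hu : u ∈ E k)
    (humin : ∀ v ∈ E k, u ≤ v) (hki : k ≤ i) (hx : x ∈ E i) : u ≤ x := by
  rcases hki.lt_or_eq with hki | rfl
  · exact (hord k i u x hu hx hki).le
  · exact humin x hx

theorem ClassesOrdered.isLeast_biUnion {s : Finset ι} {k : ι} {u : α} (hord : ClassesOrdered E)
    (hk : k ∈ s) (hks : ∀ i ∈ s, k ≤ i) (hu : u ∈ E k) (humin : ∀ v ∈ E k, u ≤ v) :
    IsLeast (s.biUnion E : Set α) u := by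
  refine ⟨mem_biUnion.2 ⟨k, hk, hu⟩, fun v hv => ?_⟩
  obtain ⟨i, hi, hvi⟩ := mem_biUnion.1 (mem_coe.1 hv)
  exact hord.le_of_mem hu humin (hks i hi) hvi

theorem ClassesOrdered.lt_of_mem_biUnion_Ico [LocallyFiniteOrder ι] {k l : ι} {v b : α}
    (hord : ClassesOrdered E) (hv : v ∈ (Ico k l).biUnion E) (hb : b ∈ E l) : v < b := by
  obtain ⟨i, hi, hvi⟩ := mem_biUnion.1 hv
  exact hord i l v b hvi hb (mem_Ico.1 hi).2

end OrderedClasses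

section Counts

variable {α : Type*} [LinearOrder α] {t : ℕ} {E : Fin t → Finset α}

theorem a1_le_a1 {k k' l : Fin t} {x x' y y' : α} (hk : k' ≤ k) (hx : x' ≤ x)
    (hy' : y' ∉ (Ico k l).biUnion E) : a1 E k l x y ≤ a1 E k' l x' y' := by
  refine card_le_card fun v hv => ?_
  obtain ⟨hvS, hxv, -⟩ := mem_filter.1 hv
  obtain ⟨i, hi, hvi⟩ := mem_biUnion.1 hvS
  have hi' : i ∈ Ico k' l := mem_Ico.2 ⟨hk.trans (mem_Ico.1 hi).1, (mem_Ico.1 hi).2⟩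
  exact mem_filter.2 ⟨mem_biUnion.2 ⟨i, hi', hvi⟩, hx.trans_lt hxv, ne_of_mem_of_not_mem hvS hy'⟩

theorem a2_antitone (l : Fin t) : Antitone (a2 E l) :=
  fun _ _ hxy => card_le_card <| monotone_filter_right _ fun _ _ hv => hxy.trans_lt hv

theorem a1_least_add_one {k l : Fin t} {u : Fin t → α} (hord : ClassesOrdered E)
    (hdisj : Pairwise (Disjoint on E)) (hu : ∀ i, u i ∈ E i) (humin : ∀ v ∈ E k, u k ≤ v)
    (hkl : k < l) : a1 E k l (u k) (u l) + 1 = ∑ i ∈ Ico k l, #(E i) := by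
  have hS := hord.isLeast_biUnion (mem_Ico.2 ⟨le_rfl, hkl⟩) (fun i hi => (mem_Ico.1 hi).1)
    (hu k) humin
  rw [a1, filter_congr fun v hv => and_iff_left (hord.lt_of_mem_biUnion_Ico hv (hu l)).ne,
    card_filter_lt_add_one_of_isLeast hS, card_biUnion fun i _ j _ hij => hdisj hij]

theorem a2_least_add_one {l : Fin t} {u : α} (hord : ClassesOrdered E)
    (hdisj : Pairwise (Disjoint on E)) (hu : u ∈ E l) (humin : ∀ v ∈ E l, u ≤ v) :
    a2 E l u + 1 = ∑ i ∈ Ici l, #(E i) := by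
  have hS := hord.isLeast_biUnion (mem_Ici.2 le_rfl) (fun i hi => mem_Ici.1 hi) hu humin
  rw [a2, card_filter_lt_add_one_of_isLeast hS, card_biUnion fun i _ j _ hij => hdisj hij]

theorem a1_least_add_a2_least {k l : Fin t} {u : Fin t → α} (hord : ClassesOrdered E)
    (hdisj : Pairwise (Disjoint on E)) (hu : ∀ i, u i ∈ E i) (humin : ∀ i, ∀ v ∈ E i, u i ≤ v)
    (hkl : k < l) : a1 E k l (u k) (u l) + a2 E l (u l) + 2 = ∑ i ∈ Ici k, #(E i) := by
  rw [← sum_Ico_add_sum_Ici _ hkl.le, ← a1_least_add_one hord hdisj hu (humin k) hkl,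
    ← a2_least_add_one hord hdisj (hu l) (humin l)]
  ring

end Counts

theorem stmt7 {α : Type*} [LinearOrder α] {t : ℕ} (ht : 2 ≤ t)
    (M : Matroid α) (E : Fin t → Finset α)
    (hdisj : ∀ i j : Fin t, i ≠ j → Disjoint (E i) (E j))
    (hpar : ∀ (i j : Fin t) (a b : α), a ∈ E i → b ∈ E j → a ≠ b →
      (M.Indep {a, b} ↔ i ≠ j))
    (hrank : ∀ B : Set α, M.IsBase B → B.ncard = 2)
    (hord : ∀ (k l : Fin t) (a b : α), a ∈ E k → b ∈ E l → k < l → a < b)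
    (u : Fin t → α) (hu : ∀ i, u i ∈ E i) (humin : ∀ i, ∀ v ∈ E i, u i ≤ v) :
    (∀ (k l : Fin t) (x y : α), x ∈ E k → y ∈ E l → k < l → M.IsBase {x, y} →
      a1 E k l x y ≤ a1 E ⟨0, by omega⟩ l (u ⟨0, by omega⟩) (u l) ∧
      a2 E l y ≤ a2 E l (u l) ∧
      a1 E ⟨0, by omega⟩ l (u ⟨0, by omega⟩) (u l) + a2 E l (u l)
        = (∑ i, (E i).card) - 2) ∧
    (∀ p ∈ {q : ℕ × ℕ | ∃ (k l : Fin t) (x y : α), x ∈ E k ∧ y ∈ E l ∧ k < l ∧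
        M.IsBase {x, y} ∧ q = (a1 E k l x y, a2 E l y)},
      (∀ q ∈ {q : ℕ × ℕ | ∃ (k l : Fin t) (x y : α), x ∈ E k ∧ y ∈ E l ∧ k < l ∧
        M.IsBase {x, y} ∧ q = (a1 E k l x y, a2 E l y)},
        p.1 ≤ q.1 ∧ p.2 ≤ q.2 → q = p) →
      p.1 + p.2 = (∑ i, (E i).card) - 2) := by
  replace hord : ClassesOrdered E := hord
  set z : Fin t := ⟨0, by omega⟩
  have hz : ∀ i, z ≤ i := fun i => Nat.zero_le i.val
  have dominated : ∀ (k l : Fin t) (x y : α), x ∈ E k → y ∈ E l → k < l →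
      a1 E k l x y ≤ a1 E z l (u z) (u l) ∧ a2 E l y ≤ a2 E l (u l) := fun k l x y hx hy hkl =>
    ⟨a1_le_a1 (hz k) (hord.le_of_mem (hu z) (humin z) (hz k) hx)
      fun h => (hord.lt_of_mem_biUnion_Ico h (hu l)).false,
     a2_antitone l (humin l y hy)⟩
  have degree : ∀ l, z < l → a1 E z l (u z) (u l) + a2 E l (u l) = (∑ i, #(E i)) - 2 := by
    intro l hzl
    have := a1_least_add_a2_least hord hdisj hu humin hzl
    rw [show Ici z = univ from eq_univ_of_forall fun i => mem_Ici.2 (hz i)] at this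
    omega
  refine ⟨fun k l x y hx hy hkl _ =>
    ⟨(dominated k l x y hx hy hkl).1, (dominated k l x y hx hy hkl).2,
      degree l ((hz k).trans_lt hkl)⟩, ?_⟩
  rintro p ⟨k, l, x, y, hx, hy, hkl, -, rfl⟩ hmax
  have hzl : z < l := (hz k).trans_lt hkl
  have hpair : u z ≠ u l := (hord z l _ _ (hu z) (hu l) hzl).ne
  have hbase : M.IsBase {u z, u l} :=
    ((hpar z l _ _ (hu z) (hu l) hpair).2 hzl.ne).isBase_of_forall_ncard_eq
      (by rw [Set.ncard_pair hpair]; omega) fun B hB => by rw [hrank B hB, Set.ncard_pair hpair]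
  rw [← hmax _ ⟨z, l, u z, u l, hu z, hu l, hzl, hbase, rfl⟩ (dominated k l x y hx hy hkl)]
  exact degree l hzl
end

section
/- For positive integers s_1,...,s_t and an integer d with t ≥ d, the vector (1, h_1, h_2, h_3) is a pure O-sequence, where h_1 = Σ(s_i - 1) + (t-d), h_2 = Σ_{i<j}(s_i-1)(s_j-1) + (t-d)Σ(s_i-1) + C(t-d+1, 2), and h_3 = Σ_{i<j<k}(s_i-1)(s_j-1)(s_k-1) + (t-d)Σ_{i<j}(s_i-1)(s_j-1) + C(t-d+1,2)Σ(s_i-1) + C(t-d+2, 3). -/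
open Finset

/-!
The witness is the order ideal of monomials `f * c` of degree at most `3`, where `f` is any
monomial in `u = t - d` free variables and `c` is a product of variables from pairwise distinct
classes `Ẽ_i`, `|Ẽ_i| = s_i - 1`. Its degree-`j` part is the convolution
`∑_{p + k = j} (u + p - 1).choose p * e_k(s_1 - 1, …, s_t - 1)`, and `e_k` obeys the recursion
`e_{k+1}(t + 1) = e_{k+1}(t) + (s_{t+1} - 1) e_k(t)` obtained by asking whether the last class is
used. The ideal is pure by an exchange argument: a monomial whose degree is smaller than that of
another one can always be enlarged, by a free variable if there is one, and otherwise by a variable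
of a class that the larger monomial uses and the smaller one does not.
-/

theorem exists_forall_maximal_degree_eq {X : Type*} [PartialOrder X] {O : Set X} (deg : X → ℕ)
    (haug : ∀ x ∈ O, ∀ y ∈ O, deg x < deg y → ∃ z ∈ O, x < z) :
    ∃ D, ∀ x ∈ O, (∀ y ∈ O, x ≤ y → y = x) → deg x = D := by
  have degree_le : ∀ x ∈ O, (∀ y ∈ O, x ≤ y → y = x) → ∀ y ∈ O, deg y ≤ deg x := by
    intro x hx hmax y hy
    by_contra! hlt
    obtain ⟨z, hz, hxz⟩ := haug x hx y hy hlt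
    exact hxz.ne (hmax z hz hxz.le).symm
  by_cases h : ∃ x₀ ∈ O, ∀ y ∈ O, x₀ ≤ y → y = x₀
  · obtain ⟨x₀, hx₀, hmax₀⟩ := h
    exact ⟨deg x₀, fun x hx hmax =>
      le_antisymm (degree_le x₀ hx₀ hmax₀ x hx) (degree_le x hx hmax x₀ hx₀)⟩
  · exact ⟨0, fun x hx hmax => (h ⟨x, hx, hmax⟩).elim⟩

theorem isPureOSeq_of_orderIso {X : Type*} [PartialOrder X] (Φ : X ≃o (ℕ →₀ ℕ)) {O : Set X}
    (hfin : O.Finite) (hne : O.Nonempty) (hlow : IsLowerSet O)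
    (haug : ∀ x ∈ O, ∀ y ∈ O, mdeg (Φ x) < mdeg (Φ y) → ∃ z ∈ O, x < z) :
    IsPureOSeq fun i => ({x ∈ O | mdeg (Φ x) = i}.ncard : ℤ) := by
  refine ⟨Φ '' O, hfin.image Φ, hne.image Φ, ?_, ?_, fun i => ?_⟩
  · rintro _ ⟨x, hx, rfl⟩ n hn
    exact ⟨Φ.symm n, hlow (Φ.symm_apply_le.2 hn) hx, Φ.apply_symm_apply n⟩
  · obtain ⟨D, hD⟩ := exists_forall_maximal_degree_eq (fun x => mdeg (Φ x)) haug
    refine ⟨D, ?_⟩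
    rintro _ ⟨x, hx, rfl⟩ hmax
    exact hD x hx fun y hy hxy => Φ.injective (hmax _ ⟨y, hy, rfl⟩ (Φ.monotone hxy))
  · have hslice : {m ∈ Φ '' O | mdeg m = i} = Φ '' {x ∈ O | mdeg (Φ x) = i} := by
      ext m
      constructor
      · rintro ⟨⟨x, hx, rfl⟩, hi⟩
        exact ⟨x, ⟨hx, hi⟩, rfl⟩
      · rintro ⟨x, ⟨hx, hi⟩, rfl⟩
        exact ⟨⟨x, hx, rfl⟩, hi⟩
    rw [hslice, Set.ncard_image_of_injective _ Φ.injective]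

noncomputable def sumFinsuppOrderIso {V W Y : Type*} (e : V ⊕ W ≃ Y) :
    (V →₀ ℕ) × (W →₀ ℕ) ≃o (Y →₀ ℕ) where
  toEquiv := Finsupp.sumFinsuppEquivProdFinsupp.symm.trans (Finsupp.equivCongrLeft e)
  map_rel_iff' {x y} := by
    simp only [Equiv.trans_apply, Finsupp.equivCongrLeft_apply, Finsupp.le_def,
      Finsupp.equivMapDomain_apply, Prod.le_def]
    exact (e.symm.forall_congr_right (q := fun v => Finsupp.sumElim x.1 x.2 v ≤
      Finsupp.sumElim y.1 y.2 v)).trans Sum.forall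

theorem degree_sumFinsuppOrderIso {V W Y : Type*} (e : V ⊕ W ≃ Y) (x : (V →₀ ℕ) × (W →₀ ℕ)) :
    (sumFinsuppOrderIso e x).degree = x.1.degree + x.2.degree := by
  show (Finsupp.equivMapDomain e (Finsupp.sumElim x.1 x.2)).degree = _
  rw [Finsupp.equivMapDomain_eq_mapDomain, Finsupp.degree_mapDomain, Finsupp.degree_apply,
    Finsupp.sumElim_support, sum_disjSum]
  rfl

/-- Variables of the class part are pairs `(i, α)`: the `α`-th of the `a i` variables of class
`i`. A transversal monomial is squarefree and uses at most one variable of each class. -/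
structure IsTransversal (a : ℕ → ℕ) (t : ℕ) (c : ℕ × ℕ →₀ ℕ) : Prop where
  lt_of_mem_support : ∀ x ∈ c.support, x.1 < t ∧ x.2 < a x.1
  le_one : ∀ x, c x ≤ 1
  injOn_fst : Set.InjOn Prod.fst (c.support : Set (ℕ × ℕ))

namespace IsTransversal

variable {a : ℕ → ℕ} {t : ℕ} {c c' : ℕ × ℕ →₀ ℕ}

theorem zero : IsTransversal a t 0 := ⟨by simp, by simp, by simp⟩

theorem mono (h : IsTransversal a t c) (hc : c' ≤ c) : IsTransversal a t c' where
  lt_of_mem_support x hx := h.lt_of_mem_support x (Finsupp.support_mono hc hx)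
  le_one x := (hc x).trans (h.le_one x)
  injOn_fst := h.injOn_fst.mono (Finsupp.support_mono hc)

theorem mono_classes (h : IsTransversal a t c) {t' : ℕ} (ht : t ≤ t') :
    IsTransversal a t' c where
  lt_of_mem_support x hx := (h.lt_of_mem_support x hx).imp_left (·.trans_le ht)
  le_one := h.le_one
  injOn_fst := h.injOn_fst

theorem apply_eq_zero (h : IsTransversal a t c) {x : ℕ × ℕ} (hx : t ≤ x.1) : c x = 0 :=
  Finsupp.notMem_support_iff.1 fun hmem => (h.lt_of_mem_support x hmem).1.not_ge hx

theorem of_succ (h : IsTransversal a (t + 1) c) (hc : ∀ x ∈ c.support, x.1 ≠ t) :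
    IsTransversal a t c where
  lt_of_mem_support x hx :=
    (h.lt_of_mem_support x hx).imp_left fun hlt => lt_of_le_of_ne (Nat.le_of_lt_succ hlt) (hc x hx)
  le_one := h.le_one
  injOn_fst := h.injOn_fst

theorem degree_eq_card (h : IsTransversal a t c) : c.degree = #c.support := by
  rw [Finsupp.degree_apply, card_eq_sum_ones]
  exact sum_congr rfl fun x hx =>
    le_antisymm (h.le_one x) (Nat.one_le_iff_ne_zero.2 (Finsupp.mem_support_iff.1 hx))

theorem card_image_fst (h : IsTransversal a t c) : #(c.support.image Prod.fst) = c.degree := by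
  rw [card_image_of_injOn h.injOn_fst, h.degree_eq_card]

theorem add_single (h : IsTransversal a t c) {x : ℕ × ℕ} (hx : x.1 < t ∧ x.2 < a x.1)
    (hfresh : ∀ y ∈ c.support, y.1 ≠ x.1) : IsTransversal a t (c + Finsupp.single x 1) := by
  have hcx : c x = 0 := Finsupp.notMem_support_iff.1 fun hmem => hfresh x hmem rfl
  have hsupp : (c + Finsupp.single x 1).support ⊆ insert x c.support := by
    refine Finsupp.support_add.trans fun y hy => ?_
    rcases mem_union.1 hy with hy | hy
    · exact mem_insert_of_mem hy
    · rw [mem_singleton.1 (Finsupp.support_single_subset hy)]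
      exact mem_insert_self x _
  refine ⟨fun y hy => ?_, fun y => ?_, ?_⟩
  · rcases mem_insert.1 (hsupp hy) with rfl | hy
    · exact hx
    · exact h.lt_of_mem_support y hy
  · rcases eq_or_ne x y with rfl | hxy
    · simp [hcx]
    · simpa [Finsupp.single_apply, hxy] using h.le_one y
  · refine Set.InjOn.mono (by exact_mod_cast hsupp) ?_
    rw [coe_insert, Set.injOn_insert fun hmem => hfresh x hmem rfl]
    refine ⟨h.injOn_fst, fun ⟨y, hy, hyx⟩ => hfresh y hy hyx⟩

end IsTransversal

noncomputable def transversals (a : ℕ → ℕ) : ℕ → ℕ → Finset (ℕ × ℕ →₀ ℕ)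
  | _, 0 => {0}
  | 0, _ + 1 => ∅
  | t + 1, k + 1 => transversals a t (k + 1) ∪
      (range (a t) ×ˢ transversals a t k).image fun p => Finsupp.single (t, p.1) 1 + p.2

theorem transversals_zero (a : ℕ → ℕ) (t : ℕ) : transversals a t 0 = {0} := by
  cases t <;> rfl

theorem mem_transversals_zero {a : ℕ → ℕ} {t : ℕ} {c : ℕ × ℕ →₀ ℕ} :
    c ∈ transversals a t 0 ↔ IsTransversal a t c ∧ c.degree = 0 := by
  rw [transversals_zero, mem_singleton, Finsupp.degree_eq_zero_iff]
  exact ⟨fun h => ⟨h ▸ IsTransversal.zero, h⟩, And.right⟩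

theorem mem_transversals {a : ℕ → ℕ} {t k : ℕ} {c : ℕ × ℕ →₀ ℕ} :
    c ∈ transversals a t k ↔ IsTransversal a t c ∧ c.degree = k := by
  induction t generalizing k c with
  | zero =>
    rcases k with _ | k
    · exact mem_transversals_zero
    refine ⟨fun h => (notMem_empty c h).elim, fun ⟨hc, hdeg⟩ => ?_⟩
    have : c = 0 := Finsupp.ext fun x => hc.apply_eq_zero x.1.zero_le
    simp [this] at hdeg
  | succ t ih =>
    rcases k with _ | k
    · exact mem_transversals_zero
    simp only [transversals, mem_union, mem_image, mem_product, mem_range, ih, Prod.exists]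
    constructor
    · rintro (⟨hc, hdeg⟩ | ⟨α, c', ⟨hα, hc', hdeg⟩, rfl⟩)
      · exact ⟨hc.mono_classes t.le_succ, hdeg⟩
      refine ⟨add_comm c' _ ▸ (hc'.mono_classes t.le_succ).add_single ⟨t.lt_succ_self, hα⟩
        fun y hy => (hc'.lt_of_mem_support y hy).1.ne, ?_⟩
      rw [map_add, Finsupp.degree_single, hdeg, add_comm]
    · rintro ⟨hc, hdeg⟩
      by_cases hclass : ∃ x ∈ c.support, x.1 = t
      · obtain ⟨x, hx, rfl⟩ := hclass
        have hcx : c x = 1 :=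
          le_antisymm (hc.le_one x) (Nat.one_le_iff_ne_zero.2 (Finsupp.mem_support_iff.1 hx))
        have hsplit : Finsupp.single x 1 + c.erase x = c := hcx ▸ Finsupp.single_add_erase x c
        refine Or.inr ⟨x.2, c.erase x, ⟨(hc.lt_of_mem_support x hx).2, ?_, ?_⟩, hsplit⟩
        · refine (hc.mono (le_add_self.trans_eq hsplit)).of_succ fun y hy hyx => ?_
          rw [Finsupp.support_erase, mem_erase] at hy
          exact hy.1 (hc.injOn_fst hy.2 hx hyx)
        · rw [← hsplit, map_add, Finsupp.degree_single] at hdeg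
          omega
      · push Not at hclass
        exact Or.inl ⟨hc.of_succ hclass, hdeg⟩

theorem card_transversals_succ_succ (a : ℕ → ℕ) (t k : ℕ) :
    #(transversals a (t + 1) (k + 1)) =
      #(transversals a t (k + 1)) + a t * #(transversals a t k) := by
  have hzero : ∀ {k c} α, c ∈ transversals a t k → c (t, α) = 0 := fun α hc =>
    (mem_transversals.1 hc).1.apply_eq_zero le_rfl
  rw [transversals, card_union_of_disjoint, card_image_of_injOn, card_product, card_range]
  · rintro ⟨α, c⟩ hc ⟨β, c'⟩ hc' heq
    simp only [coe_product, Set.mem_prod, mem_coe] at hc hc'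
    have hαβ : α = β := by
      have := DFunLike.congr_fun heq (t, α)
      simp only [Finsupp.add_apply, Finsupp.single_apply, hzero α hc.2, hzero α hc'.2] at this
      simpa [eq_comm] using this
    subst hαβ
    rw [add_right_inj] at heq
    exact Prod.ext rfl heq
  · refine disjoint_left.2 fun c hc hc' => ?_
    obtain ⟨⟨α, c'⟩, hmem, rfl⟩ := mem_image.1 hc'
    have := hzero α hc
    simp [hzero α (mem_product.1 hmem).2] at this

theorem card_transversals_succ (a : ℕ → ℕ) (t k : ℕ) :
    #(transversals a t (k + 1)) = ∑ i ∈ range t, a i * #(transversals a i k) := by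
  induction t with
  | zero => rfl
  | succ t ih => rw [card_transversals_succ_succ, ih, sum_range_succ]

theorem card_transversals_zero (a : ℕ → ℕ) (t : ℕ) : #(transversals a t 0) = 1 := by
  rw [transversals_zero, card_singleton]

theorem card_transversals_one (a : ℕ → ℕ) (t : ℕ) :
    #(transversals a t 1) = ∑ i ∈ range t, a i := by
  simp [card_transversals_succ, card_transversals_zero]

theorem card_transversals_two (a : ℕ → ℕ) (t : ℕ) :
    #(transversals a t 2) = ∑ j ∈ range t, ∑ i ∈ range j, a i * a j := by
  show #(transversals a t (1 + 1)) = _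
  simp only [card_transversals_succ a t 1, card_transversals_one, mul_sum]
  exact sum_congr rfl fun j _ => sum_congr rfl fun i _ => mul_comm _ _

theorem card_transversals_three (a : ℕ → ℕ) (t : ℕ) :
    #(transversals a t 3) =
      ∑ k ∈ range t, ∑ j ∈ range k, ∑ i ∈ range j, a i * (a j * a k) := by
  show #(transversals a t (2 + 1)) = _
  simp only [card_transversals_succ a t 2, card_transversals_two, mul_sum]
  exact sum_congr rfl fun k _ => sum_congr rfl fun j _ => sum_congr rfl fun i _ => by ring

theorem Fin.sum_Iio_eq_sum_range {M : Type*} [AddCommMonoid M] {t : ℕ} (j : Fin t)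
    (f : ℕ → M) :
    ∑ i ∈ Iio j, f i = ∑ i ∈ range j, f i := by
  rw [← Nat.Iio_eq_range, ← Fin.map_valEmbedding_Iio, sum_map]
  rfl

theorem sum_fin_pairs_lt {M : Type*} [AddCommMonoid M] {t : ℕ} (g : ℕ → ℕ → M) :
    ∑ p ∈ univ.filter (fun p : Fin t × Fin t => p.1 < p.2), g p.1 p.2 =
      ∑ j ∈ range t, ∑ i ∈ range j, g i j := by
  rw [sum_finset_product_right _ univ (fun j => Iio j) (by simp),
    sum_congr rfl fun j _ => Fin.sum_Iio_eq_sum_range j (g · j)]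
  exact Fin.sum_univ_eq_sum_range (fun j => ∑ i ∈ range j, g i j) t

theorem sum_fin_triples_lt {M : Type*} [AddCommMonoid M] {t : ℕ} (g : ℕ → ℕ → ℕ → M) :
    ∑ p ∈ univ.filter (fun p : Fin t × Fin t × Fin t => p.1 < p.2.1 ∧ p.2.1 < p.2.2),
        g p.1 p.2.1 p.2.2 =
      ∑ k ∈ range t, ∑ j ∈ range k, ∑ i ∈ range j, g i j k := by
  rw [sum_finset_product_right _ (univ.filter fun p : Fin t × Fin t => p.1 < p.2)
    (fun p => Iio p.1) (by simp [and_comm]),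
    sum_congr rfl fun p _ => Fin.sum_Iio_eq_sum_range p.1 (g · p.1 p.2)]
  exact sum_fin_pairs_lt (fun j k => ∑ i ∈ range j, g i j k)

def witnessIdeal (u t : ℕ) (a : ℕ → ℕ) (n : ℕ) : Set ((Fin u →₀ ℕ) × (ℕ × ℕ →₀ ℕ)) :=
  {x | IsTransversal a t x.2 ∧ x.1.degree + x.2.degree ≤ n}

theorem card_biUnion_antidiagonal_product {α β : Type*} [DecidableEq α] [DecidableEq β]
    (A : ℕ → Finset α) (B : ℕ → Finset β) (deg : α → ℕ) (hA : ∀ p, ∀ x ∈ A p, deg x = p)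
    (j : ℕ) :
    #((antidiagonal j).biUnion fun pq => A pq.1 ×ˢ B pq.2) =
      ∑ pq ∈ antidiagonal j, #(A pq.1) * #(B pq.2) := by
  rw [card_biUnion]
  · simp only [card_product]
  intro pq hpq pq' hpq' hne
  refine disjoint_left.2 fun x hx hx' => hne ?_
  have h₁ := hA _ _ (mem_product.1 hx).1
  have h₂ := hA _ _ (mem_product.1 hx').1
  rw [mem_coe, HasAntidiagonal.mem_antidiagonal] at hpq hpq'
  exact Prod.ext (h₁.symm.trans h₂) (by omega)

theorem coe_biUnion_antidiagonal_finsuppAntidiag_transversals (u t : ℕ) (a : ℕ → ℕ) (j : ℕ) :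
    (↑((antidiagonal j).biUnion fun pq =>
        (univ : Finset (Fin u)).finsuppAntidiag pq.1 ×ˢ transversals a t pq.2) :
      Set ((Fin u →₀ ℕ) × (ℕ × ℕ →₀ ℕ))) =
      {x | IsTransversal a t x.2 ∧ x.1.degree + x.2.degree = j} := by
  ext ⟨f, c⟩
  simp only [coe_biUnion, mem_coe, HasAntidiagonal.mem_antidiagonal, Set.mem_iUnion, mem_product,
    mem_finsuppAntidiag, mem_transversals, ← Finsupp.degree_eq_sum, subset_univ, and_true,
    Set.mem_ofPred_eq, exists_prop, Prod.exists]
  constructor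
  · rintro ⟨p, q, rfl, rfl, hc, rfl⟩
    exact ⟨hc, rfl⟩
  · rintro ⟨hc, rfl⟩
    exact ⟨_, _, rfl, rfl, hc, rfl⟩

section Witness

variable (u t : ℕ) (a : ℕ → ℕ) (n : ℕ)

theorem isLowerSet_witnessIdeal : IsLowerSet (witnessIdeal u t a n) := fun _ _ hle hx =>
  ⟨hx.1.mono hle.2,
    (add_le_add (Finsupp.degree_mono hle.1) (Finsupp.degree_mono hle.2)).trans hx.2⟩

theorem ncard_witnessIdeal_degree_eq (j : ℕ) :
    {x ∈ witnessIdeal u t a n | x.1.degree + x.2.degree = j}.ncard =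
      if j ≤ n then ∑ pq ∈ antidiagonal j, (u + pq.1 - 1).choose pq.1 * #(transversals a t pq.2)
      else 0 := by
  split_ifs with hj
  · have hslice : {x ∈ witnessIdeal u t a n | x.1.degree + x.2.degree = j} =
        {x | IsTransversal a t x.2 ∧ x.1.degree + x.2.degree = j} := by
      ext x
      exact ⟨fun ⟨⟨hc, _⟩, hdeg⟩ => ⟨hc, hdeg⟩, fun ⟨hc, hdeg⟩ => ⟨⟨hc, hdeg.trans_le hj⟩, hdeg⟩⟩
    rw [hslice, ← coe_biUnion_antidiagonal_finsuppAntidiag_transversals, Set.ncard_coe_finset,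
      card_biUnion_antidiagonal_product _ _ Finsupp.degree
        (fun p f hf => by rw [Finsupp.degree_eq_sum, (mem_finsuppAntidiag.1 hf).1])]
    simp only [card_finsuppAntidiag_nat_eq_choose, card_univ, Fintype.card_fin]
  · have hempty : {x ∈ witnessIdeal u t a n | x.1.degree + x.2.degree = j} = ∅ :=
      Set.eq_empty_of_forall_notMem fun _ hx => hj (hx.2 ▸ hx.1.2)
    rw [hempty, Set.ncard_empty]

theorem finite_witnessIdeal : (witnessIdeal u t a n).Finite := by
  refine ((range (n + 1)).biUnion fun j => (antidiagonal j).biUnion fun pq =>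
    (univ : Finset (Fin u)).finsuppAntidiag pq.1 ×ˢ transversals a t pq.2).finite_toSet.subset ?_
  intro x hx
  rw [coe_biUnion, Set.mem_iUnion₂]
  refine ⟨_, mem_coe.2 (mem_range.2 (Nat.lt_succ_of_le hx.2)), ?_⟩
  rw [coe_biUnion_antidiagonal_finsuppAntidiag_transversals]
  exact ⟨hx.1, rfl⟩

theorem exists_lt_of_degree_lt_witnessIdeal {x y} (hx : x ∈ witnessIdeal u t a n)
    (hy : y ∈ witnessIdeal u t a n) (hlt : x.1.degree + x.2.degree < y.1.degree + y.2.degree) :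
    ∃ z ∈ witnessIdeal u t a n, x < z := by
  obtain ⟨f, c⟩ := x
  obtain ⟨f', c'⟩ := y
  obtain ⟨hc, -⟩ := hx
  obtain ⟨hc', hdeg'⟩ := hy
  dsimp only at hc hc' hdeg' hlt
  by_cases hf' : f' = 0
  · rw [hf', map_zero, zero_add] at hlt
    have hcard : #(c.support.image Prod.fst) < #(c'.support.image Prod.fst) := by
      rw [hc.card_image_fst, hc'.card_image_fst]
      omega
    obtain ⟨i, hi', hi⟩ := exists_mem_notMem_of_card_lt_card hcard
    obtain ⟨v, hv, rfl⟩ := mem_image.1 hi'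
    refine ⟨(f, c + Finsupp.single v 1), ⟨hc.add_single (hc'.lt_of_mem_support v hv)
      fun y hy hyv => hi (hyv ▸ mem_image_of_mem Prod.fst hy), ?_⟩, ?_⟩
    · simp only [map_add, Finsupp.degree_single]
      omega
    · exact Prod.mk_lt_mk_iff_right.2 (lt_add_of_pos_right c (by simp [pos_iff_ne_zero]))
  · obtain ⟨v, hv⟩ := Finsupp.support_nonempty_iff.2 hf'
    refine ⟨(f + Finsupp.single v 1, c), ⟨hc, ?_⟩, ?_⟩
    · simp only [map_add, Finsupp.degree_single]
      omega
    · exact Prod.mk_lt_mk_iff_left.2 (lt_add_of_pos_right f (by simp [pos_iff_ne_zero]))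

theorem isPureOSeq_witnessIdeal :
    IsPureOSeq fun j => ((if j ≤ n then
      ∑ pq ∈ antidiagonal j, (u + pq.1 - 1).choose pq.1 * #(transversals a t pq.2)
      else 0 : ℕ) : ℤ) := by
  obtain ⟨e⟩ := nonempty_equiv_of_countable (α := Fin u ⊕ ℕ × ℕ) (β := ℕ)
  have hdeg (x) : mdeg (sumFinsuppOrderIso e x) = x.1.degree + x.2.degree :=
    degree_sumFinsuppOrderIso e x
  simp only [← ncard_witnessIdeal_degree_eq, ← hdeg]
  exact isPureOSeq_of_orderIso (sumFinsuppOrderIso e) (finite_witnessIdeal u t a n)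
    ⟨0, IsTransversal.zero, by simp⟩ (isLowerSet_witnessIdeal u t a n)
    fun x hx y hy hlt =>
      exists_lt_of_degree_lt_witnessIdeal u t a n hx hy (by simpa [hdeg] using hlt)

end Witness

theorem stmt8_general {t d : ℕ} (s : Fin t → ℕ) :
    IsPureOSeq (fun j =>
      if j = 0 then 1
      else       if j = 1 then ((∑ i, (s i - 1)) + (t - d) : ℕ)
      else if j = 2 then ((∑ p ∈ Finset.univ.filter (fun p : Fin t × Fin t => p.1 < p.2), (s p.1 - 1) * (s p.2 - 1)) +
        (t - d) * (∑ i, (s i - 1)) + Nat.choose (t - d + 1) 2 : ℕ)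
      else if j = 3 then ((∑ p ∈ Finset.univ.filter (fun p : Fin t × Fin t × Fin t => p.1 < p.2.1 ∧ p.2.1 < p.2.2),
          (s p.1 - 1) * ((s p.2.1 - 1) * (s p.2.2 - 1))) +
        (t - d) * (∑ p ∈ Finset.univ.filter (fun p : Fin t × Fin t => p.1 < p.2), (s p.1 - 1) * (s p.2 - 1)) +
        Nat.choose (t - d + 1) 2 * (∑ i, (s i - 1)) + Nat.choose (t - d + 2) 3 : ℕ)
      else 0) := by
  set a : ℕ → ℕ := fun i => if h : i < t then s ⟨i, h⟩ - 1 else 0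
  have ha (i : Fin t) : a i = s i - 1 := dif_pos i.2
  convert isPureOSeq_witnessIdeal (t - d) t a 3 using 2 with j
  simp only [← ha, Fin.sum_univ_eq_sum_range a, sum_fin_pairs_lt fun i j => a i * a j,
    sum_fin_triples_lt fun i j k => a i * (a j * a k)]
  rcases j with _ | _ | _ | _ | j <;>
    simp [Finset.Nat.antidiagonal_succ, add_assoc, card_transversals_zero, card_transversals_one,
      card_transversals_two, card_transversals_three]

theorem stmt8 {t d : ℕ} (hdt : d ≤ t) (s : Fin t → ℕ) (hs : ∀ i, 1 ≤ s i) :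
    IsPureOSeq (fun j =>
      if j = 0 then 1
      else       if j = 1 then ((∑ i, (s i - 1)) + (t - d) : ℕ)
      else if j = 2 then ((∑ p ∈ Finset.univ.filter (fun p : Fin t × Fin t => p.1 < p.2), (s p.1 - 1) * (s p.2 - 1)) +
        (t - d) * (∑ i, (s i - 1)) + Nat.choose (t - d + 1) 2 : ℕ)
      else if j = 3 then ((∑ p ∈ Finset.univ.filter (fun p : Fin t × Fin t × Fin t => p.1 < p.2.1 ∧ p.2.1 < p.2.2),
          (s p.1 - 1) * ((s p.2.1 - 1) * (s p.2.2 - 1))) +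
        (t - d) * (∑ p ∈ Finset.univ.filter (fun p : Fin t × Fin t => p.1 < p.2), (s p.1 - 1) * (s p.2 - 1)) +
        Nat.choose (t - d + 1) 2 * (∑ i, (s i - 1)) + Nat.choose (t - d + 2) 3 : ℕ)
      else 0) :=
  stmt8_general s
end

section
/- Let M be a loopless matroid of rank d ≥ 3 with parallelism class sizes s_1,...,s_t. Then f_2(M) ≤ Σ_{1≤i<j<k≤t} s_i s_j s_k, and consequently h_3(M) ≤ Σ_{i<j<k}(s_i-1)(s_j-1)(s_k-1) + (t-d)Σ_{i<j}(s_i-1)(s_j-1) + C(t-d+1,2)Σ(s_i-1) + C(t-d+2,3). -/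
/-!
An independent 3-set of a loopless matroid meets three distinct parallel classes, so
`f₂ ≤ e₃(s)`, the third elementary symmetric function of the class sizes. Conversely two elements
of distinct classes are independent, so `f₁ ≥ e₂(s)`, while `f₀ ≤ e₁(s)` and `f₋₁ = 1`.
Comparing coefficients of `λ³` gives `h₃ = f₂ - (d-2) f₁ + C(d-1,2) f₀ - C(d,3) f₋₁`, in which
every `f` carries a coefficient of the right sign, hence
`h₃ ≤ e₃(s) - (d-2) e₂(s) + C(d-1,2) e₁(s) - C(d,3)`. Writing `sᵢ = yᵢ + 1` and expanding
`e_k(y + 1) = ∑ₘ C(t-m, k-m) eₘ(y)` collapses this right-hand side to the bound in the `yᵢ`.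
-/

open Finset

/-- `fNum M i` is the number of independent sets of `M` of cardinality `i`,
i.e. `f_{i-1}(M)`. -/
noncomputable def fNum {α : Type*} (M : Matroid α) (i : ℕ) : ℕ :=
  {A : Set α | M.Indep A ∧ A.ncard = i}.ncard

open Polynomial

section Sorting

variable {ι : Type*} [LinearOrder ι]

lemma exists_key_lt_lt_triple_eq {β : Type*} (f : β → ι) {x y z : β} (hxy : f x ≠ f y)
    (hxz : f x ≠ f z) (hyz : f y ≠ f z) :
    ∃ a b c, f a < f b ∧ f b < f c ∧ ({x, y, z} : Set β) = {a, b, c} := by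
  rcases hxy.lt_or_gt with h1 | h1 <;> rcases hxz.lt_or_gt with h2 | h2 <;>
    rcases hyz.lt_or_gt with h3 | h3
  · exact ⟨x, y, z, h1, h3, rfl⟩
  · exact ⟨x, z, y, h2, h3, by ext; simp; tauto⟩
  · exact absurd (h2.trans h1) h3.not_gt
  · exact ⟨z, x, y, h2, h1, by ext; simp; tauto⟩
  · exact ⟨y, x, z, h1, h2, by ext; simp; tauto⟩
  · exact absurd (h3.trans h1) h2.not_gt
  · exact ⟨y, z, x, h3, h2, by ext; simp; tauto⟩
  · exact ⟨z, y, x, h3, h1, by ext; simp; tauto⟩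

lemma eq_of_lt_lt_of_triple_eq {i j k i' j' k' : ι} (hij : i < j) (hjk : j < k)
    (hij' : i' < j') (hjk' : j' < k') (he : ({i, j, k} : Set ι) = {i', j', k'}) :
    (i, j, k) = (i', j', k') := by
  have hmono : ∀ {a b c : ι}, a < b → b < c → StrictMono ![a, b, c] := fun hab hbc => by
    simp [Fin.strictMono_iff_lt_succ, Fin.forall_fin_succ, hab, hbc]
  have hrange : ∀ a b c : ι, Set.range ![a, b, c] = {a, b, c} := fun a b c => by
    ext; simp; tauto
  have := ((hmono hij hjk).range_inj (hmono hij' hjk')).1 (by rw [hrange, hrange, he])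
  simp_all [funext_iff, Fin.forall_fin_succ]

end Sorting

section SortedSums

variable {ι R : Type*} [Fintype ι] [LinearOrder ι] [CommSemiring R]

lemma sum_lt_mul_eq_sum_powersetCard_two (g : ι → R) :
    ∑ p ∈ univ.filter (fun p : ι × ι => p.1 < p.2), g p.1 * g p.2
      = ∑ A ∈ powersetCard 2 univ, ∏ i ∈ A, g i := by
  refine sum_bij (fun p _ => {p.1, p.2}) ?_ ?_ ?_ ?_
  · rintro ⟨i, j⟩ hp
    simpa [mem_powersetCard] using card_pair (mem_filter.1 hp).2.ne
  · rintro ⟨i, j⟩ hp ⟨i', j'⟩ hp' he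
    simp only [mem_filter, mem_univ, true_and] at hp hp'
    rw [← coe_inj] at he
    push_cast at he
    rcases Set.pair_eq_pair_iff.1 he with ⟨rfl, rfl⟩ | ⟨rfl, rfl⟩
    · rfl
    · exact absurd (hp.trans hp') (lt_irrefl _)
  · intro A hA
    obtain ⟨x, y, hxy, rfl⟩ := card_eq_two.1 (mem_powersetCard.1 hA).2
    rcases hxy.lt_or_gt with h | h
    · exact ⟨(x, y), by simpa using h, rfl⟩
    · exact ⟨(y, x), by simpa using h, pair_comm y x⟩
  · rintro ⟨i, j⟩ hp
    rw [prod_pair (mem_filter.1 hp).2.ne]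

lemma sum_lt_lt_mul_eq_sum_powersetCard_three (g : ι → R) :
    ∑ p ∈ univ.filter (fun p : ι × ι × ι => p.1 < p.2.1 ∧ p.2.1 < p.2.2),
        g p.1 * (g p.2.1 * g p.2.2)
      = ∑ A ∈ powersetCard 3 univ, ∏ i ∈ A, g i := by
  refine sum_bij (fun p _ => {p.1, p.2.1, p.2.2}) ?_ ?_ ?_ ?_
  · rintro ⟨i, j, k⟩ hp
    simp only [mem_filter, mem_univ, true_and] at hp
    rw [mem_powersetCard, card_eq_three]
    exact ⟨subset_univ _, i, j, k, hp.1.ne, (hp.1.trans hp.2).ne, hp.2.ne, rfl⟩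
  · rintro ⟨i, j, k⟩ hp ⟨i', j', k'⟩ hp' he
    simp only [mem_filter, mem_univ, true_and] at hp hp'
    rw [← coe_inj] at he
    push_cast at he
    exact eq_of_lt_lt_of_triple_eq hp.1 hp.2 hp'.1 hp'.2 he
  · intro A hA
    obtain ⟨x, y, z, hxy, hxz, hyz, rfl⟩ := card_eq_three.1 (mem_powersetCard.1 hA).2
    obtain ⟨i, j, k, hij, hjk, he⟩ := exists_key_lt_lt_triple_eq id hxy hxz hyz
    refine ⟨(i, j, k), by simpa using ⟨hij, hjk⟩, ?_⟩
    rw [← coe_inj]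
    push_cast
    exact he.symm
  · rintro ⟨i, j, k⟩ hp
    simp only [mem_filter, mem_univ, true_and] at hp
    rw [prod_insert (by simp [hp.1.ne, (hp.1.trans hp.2).ne]), prod_pair hp.2.ne]

end SortedSums

section Expansion

variable {α : Type*} [DecidableEq α]

lemma sum_powersetCard_sum_powersetCard {M : Type*} [AddCommMonoid M] (s : Finset α)
    {m k : ℕ} (hmk : m ≤ k) (F : Finset α → M) :
    ∑ A ∈ powersetCard k s, ∑ B ∈ powersetCard m A, F B
      = (#s - m).choose (k - m) • ∑ B ∈ powersetCard m s, F B := by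
  rw [sum_comm' (t' := powersetCard m s) (s' := fun B => (powersetCard k s).filter (B ⊆ ·))]
  · rw [smul_sum]
    refine sum_congr rfl fun B hB => ?_
    have hBm := (mem_powersetCard.1 hB).2
    rw [sum_const, card_filter_powersetCard_subset B s k (mem_powersetCard.1 hB).1 (by omega),
      hBm]
  · intro A B
    simp only [mem_powersetCard, mem_filter]
    grind [Finset.Subset.trans]

lemma sum_powersetCard_prod_add_one {R : Type*} [CommSemiring R] (s : Finset α) (k : ℕ)
    (g : α → R) :
    ∑ A ∈ powersetCard k s, ∏ i ∈ A, (g i + 1)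
      = ∑ m ∈ range (k + 1), (#s - m).choose (k - m) • ∑ B ∈ powersetCard m s, ∏ i ∈ B, g i := by
  calc ∑ A ∈ powersetCard k s, ∏ i ∈ A, (g i + 1)
      = ∑ A ∈ powersetCard k s, ∑ m ∈ range (k + 1), ∑ B ∈ powersetCard m A, ∏ i ∈ B, g i := by
        refine sum_congr rfl fun A hA => ?_
        rw [prod_add_one, sum_powerset, (mem_powersetCard.1 hA).2]
    _ = _ := by
        rw [sum_comm]
        exact sum_congr rfl fun m hm =>
          sum_powersetCard_sum_powersetCard s (Nat.lt_succ_iff.1 (mem_range.1 hm)) _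

end Expansion

lemma Polynomial.coeff_one_sub_X_pow {R : Type*} [CommRing R] (n k : ℕ) :
    ((1 - X : R[X]) ^ n).coeff k = (-1) ^ k * n.choose k := by
  rcases le_or_gt k n with hkn | hkn
  · obtain ⟨m, rfl⟩ := Nat.exists_eq_add_of_le hkn
    have h1 : (1 - X : R[X]) = -(X + C (-1)) := by rw [C_neg, C_1]; ring
    rw [h1, neg_pow, ← C_1, ← C_neg, ← C_pow, coeff_C_mul, coeff_X_add_C_pow,
      Nat.add_sub_cancel_left, ← mul_assoc, ← pow_add, add_assoc, ← two_mul, pow_add, pow_mul,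
      neg_one_sq, one_pow, mul_one]
  · rw [Nat.choose_eq_zero_of_lt hkn, Nat.cast_zero, mul_zero]
    exact coeff_eq_zero_of_natDegree_lt
      ((natDegree_pow_le_of_le n (by compute_degree!)).trans_lt (by simpa using hkn))

lemma hVector_coeff_eq {d k : ℕ} (hk : k ≤ d) (h : ℕ → ℤ) (f : ℕ → ℕ)
    (hh : ∀ x : ℝ, ∑ j ∈ range (d + 1), (h j : ℝ) * x ^ j =
      ∑ i ∈ range (d + 1), (f i : ℝ) * x ^ i * (1 - x) ^ (d - i)) :
    (h k : ℝ) = ∑ i ∈ range (k + 1), (-1) ^ (k - i) * ((d - i).choose (k - i) : ℝ) * f i := by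
  have hpoly : ∑ j ∈ range (d + 1), C (h j : ℝ) * X ^ j
      = ∑ i ∈ range (d + 1), C (f i : ℝ) * ((1 - X) ^ (d - i) * X ^ i) :=
    Polynomial.funext fun x => by
      simp only [eval_finsetSum, eval_mul, eval_C, eval_pow, eval_X, eval_sub, eval_one, hh x]
      exact sum_congr rfl fun i _ => by ring
  have hcoeff := congrArg (coeff · k) hpoly
  simp only [finsetSum_coeff, coeff_C_mul_X_pow] at hcoeff
  simp only [coeff_C_mul, coeff_mul_X_pow', coeff_one_sub_X_pow, sum_ite_eq, mem_range,
    show k < d + 1 by omega, if_true] at hcoeff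
  rw [hcoeff, ← sum_range_add_sum_Ico _ (show k + 1 ≤ d + 1 by omega),
    sum_eq_zero (s := Ico _ _) fun i hi => by simp [Nat.not_le.2 (mem_Ico.1 hi).1], add_zero]
  exact sum_congr rfl fun i hi => by
    rw [if_pos (Nat.lt_succ_iff.1 (mem_range.1 hi))]; ring

lemma Nat.cast_choose_three {K : Type*} [Field K] [CharZero K] (a : ℕ) :
    (a.choose 3 : K) = a * (a - 1) * (a - 2) / 6 := by
  rw [Nat.cast_choose_eq_descPochhammer_div]
  simp [descPochhammer_succ_right, Nat.factorial]

lemma h_three_le {ι : Type*} [Fintype ι] {d : ℕ} (hd : 3 ≤ d) (hdn : d ≤ Fintype.card ι)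
    (h : ℕ → ℤ) (f : ℕ → ℕ)
    (hh : ∀ x : ℝ, ∑ j ∈ range (d + 1), (h j : ℝ) * x ^ j =
      ∑ i ∈ range (d + 1), (f i : ℝ) * x ^ i * (1 - x) ^ (d - i))
    (y : ι → ℝ) (hf3 : (f 3 : ℝ) ≤ ∑ A ∈ powersetCard 3 univ, ∏ i ∈ A, (y i + 1))
    (hf2 : ∑ A ∈ powersetCard 2 univ, ∏ i ∈ A, (y i + 1) ≤ f 2)
    (hf1 : (f 1 : ℝ) ≤ ∑ i, (y i + 1)) (hf0 : f 0 = 1) :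
    (h 3 : ℝ) ≤ ∑ A ∈ powersetCard 3 univ, ∏ i ∈ A, y i
      + ((Fintype.card ι - d : ℕ) : ℝ) * ∑ A ∈ powersetCard 2 univ, ∏ i ∈ A, y i
      + ((Fintype.card ι - d + 1).choose 2 : ℕ) * ∑ i, y i
      + ((Fintype.card ι - d + 2).choose 3 : ℕ) := by
  classical
  set n := Fintype.card ι
  have h3 : (h 3 : ℝ)
      = f 3 - (d - 2 : ℕ) * f 2 + ((d - 1).choose 2 : ℕ) * f 1 - (d.choose 3 : ℕ) := by
    rw [hVector_coeff_eq hd h f hh]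
    simp [sum_range_succ, hf0]
    ring
  have e3 : ∑ A ∈ powersetCard 3 univ, ∏ i ∈ A, (y i + 1)
      = ∑ A ∈ powersetCard 3 univ, ∏ i ∈ A, y i
        + (n - 2 : ℕ) * ∑ A ∈ powersetCard 2 univ, ∏ i ∈ A, y i
        + ((n - 1).choose 2 : ℕ) * ∑ i, y i + (n.choose 3 : ℕ) := by
    rw [sum_powersetCard_prod_add_one]
    simp [sum_range_succ, powersetCard_one, n]
    ring
  have e2 : ∑ A ∈ powersetCard 2 univ, ∏ i ∈ A, (y i + 1)
      = ∑ A ∈ powersetCard 2 univ, ∏ i ∈ A, y i + (n - 1 : ℕ) * ∑ i, y i + (n.choose 2 : ℕ) := by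
    rw [sum_powersetCard_prod_add_one]
    simp [sum_range_succ, powersetCard_one, n]
    ring
  rw [sum_add_distrib, sum_const, card_univ, nsmul_one] at hf1
  have m2 := mul_le_mul_of_nonneg_left hf2 (Nat.cast_nonneg (α := ℝ) (d - 2))
  have m1 := mul_le_mul_of_nonneg_left hf1 (Nat.cast_nonneg (α := ℝ) ((d - 1).choose 2))
  simp only [Nat.cast_choose_two, Nat.cast_choose_three] at h3 e3 e2 m1 ⊢
  push_cast [Nat.cast_sub hdn, Nat.cast_sub (show 1 ≤ d by omega),
    Nat.cast_sub (show 2 ≤ d by omega), Nat.cast_sub (show 1 ≤ n by omega),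
    Nat.cast_sub (show 2 ≤ n by omega)] at h3 e3 e2 m1 m2 ⊢
  linear_combination h3 + hf3 + m2 + m1 + e3 - (d - 2) * e2

section Matroid

variable {α : Type*} (M : Matroid α)

lemma fNum_zero [Finite α] : fNum M 0 = 1 := by
  have hempty : {A : Set α | M.Indep A ∧ A.ncard = 0} = {∅} := by
    ext A
    simp only [Set.mem_ofPred_eq, Set.mem_singleton_iff, Set.ncard_eq_zero (Set.toFinite A)]
    exact ⟨And.right, fun h => ⟨h ▸ M.empty_indep, h⟩⟩
  rw [fNum, hempty, Set.ncard_singleton]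

lemma fNum_one_le {ι : Type*} [Fintype ι] (E : ι → Finset α)
    (hE : ∀ a ∈ M.E, ∃ i, a ∈ E i) : fNum M 1 ≤ ∑ i, #(E i) := by
  classical
  have hsub : {A : Set α | M.Indep A ∧ A.ncard = 1}
      ⊆ (fun a => {a}) '' ↑(univ.biUnion E) := by
    rintro A ⟨hA, hA1⟩
    obtain ⟨a, rfl⟩ := Set.ncard_eq_one.1 hA1
    obtain ⟨i, hi⟩ := hE a (hA.subset_ground rfl)
    exact ⟨a, by simpa using ⟨i, hi⟩, rfl⟩
  calc fNum M 1 ≤ ((fun a => {a}) '' ↑(univ.biUnion E) : Set (Set α)).ncard :=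
        Set.ncard_le_ncard hsub ((finite_toSet _).image _)
    _ ≤ (↑(univ.biUnion E) : Set α).ncard := Set.ncard_image_le (finite_toSet _)
    _ ≤ ∑ i, #(E i) := by rw [Set.ncard_coe_finset]; exact card_biUnion_le

variable {ι : Type*} [Fintype ι] [LinearOrder ι] (E : ι → Finset α)

lemma fNum_three_le (cls : α → ι) (hcls : ∀ a ∈ M.E, a ∈ E (cls a))
    (hsame : ∀ a ∈ M.E, ∀ b ∈ M.E, a ≠ b → M.Indep {a, b} → cls a ≠ cls b) :
    fNum M 3 ≤ ∑ p ∈ univ.filter (fun p : ι × ι × ι => p.1 < p.2.1 ∧ p.2.1 < p.2.2),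
      #(E p.1) * (#(E p.2.1) * #(E p.2.2)) := by
  classical
  set T := (univ.filter (fun p : ι × ι × ι => p.1 < p.2.1 ∧ p.2.1 < p.2.2)).sigma
    (fun p => E p.1 ×ˢ E p.2.1 ×ˢ E p.2.2)
  set φ : (_ : ι × ι × ι) × α × α × α → Set α := fun q => {q.2.1, q.2.2.1, q.2.2.2}
  have hsub : {A : Set α | M.Indep A ∧ A.ncard = 3} ⊆ φ '' ↑T := by
    rintro A ⟨hA, hA3⟩
    obtain ⟨x, y, z, hxy, hxz, hyz, rfl⟩ := Set.ncard_eq_three.1 hA3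
    have hcls_ne : ∀ a ∈ ({x, y, z} : Set α), ∀ b ∈ ({x, y, z} : Set α), a ≠ b → cls a ≠ cls b :=
      fun a ha b hb hab => hsame a (hA.subset_ground ha) b (hA.subset_ground hb) hab
        (hA.subset (Set.pair_subset ha hb))
    obtain ⟨a, b, c, hab, hbc, habc⟩ := exists_key_lt_lt_triple_eq cls
      (hcls_ne x (by simp) y (by simp) hxy) (hcls_ne x (by simp) z (by simp) hxz)
      (hcls_ne y (by simp) z (by simp) hyz)
    rw [habc] at hA ⊢
    have hmem : ∀ x ∈ ({a, b, c} : Set α), x ∈ E (cls x) := fun x hx =>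
      hcls x (hA.subset_ground hx)
    refine ⟨⟨(cls a, cls b, cls c), (a, b, c)⟩, ?_, rfl⟩
    simp [T, hab, hbc, hmem]
  calc fNum M 3 ≤ (φ '' ↑T).ncard := Set.ncard_le_ncard hsub ((finite_toSet _).image _)
    _ ≤ (T : Set ((_ : ι × ι × ι) × α × α × α)).ncard := Set.ncard_image_le (finite_toSet _)
    _ = _ := by rw [Set.ncard_coe_finset, card_sigma]; simp only [card_product]

lemma le_fNum_two [Finite α] (hdisj : Pairwise fun i j => Disjoint (E i) (E j))
    (hcross : ∀ i j, i ≠ j → ∀ a ∈ E i, ∀ b ∈ E j, M.Indep {a, b}) :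
    ∑ p ∈ univ.filter (fun p : ι × ι => p.1 < p.2), #(E p.1) * #(E p.2) ≤ fNum M 2 := by
  classical
  have huniq : ∀ {a i j}, a ∈ E i → a ∈ E j → i = j := fun hi hj =>
    by_contra fun hij => disjoint_left.1 (hdisj hij) hi hj
  set T := (univ.filter (fun p : ι × ι => p.1 < p.2)).sigma (fun p => E p.1 ×ˢ E p.2)
  have hinj : Set.InjOn (fun q : (_ : ι × ι) × α × α => ({q.2.1, q.2.2} : Set α)) ↑T := by
    rintro ⟨⟨i, j⟩, a, b⟩ hq ⟨⟨i', j'⟩, a', b'⟩ hq' he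
    simp only [T, coe_sigma, Set.mem_sigma_iff, coe_filter, mem_univ, true_and,
      Set.mem_ofPred_eq, mem_coe, mem_product] at hq hq'
    rcases Set.pair_eq_pair_iff.1 he with ⟨rfl, rfl⟩ | ⟨rfl, rfl⟩
    · rw [huniq hq.2.1 hq'.2.1, huniq hq.2.2 hq'.2.2]
    · cases huniq hq.2.1 hq'.2.2
      cases huniq hq.2.2 hq'.2.1
      exact absurd (hq.1.trans hq'.1) (lt_irrefl _)
  have hsub : (fun q : (_ : ι × ι) × α × α => ({q.2.1, q.2.2} : Set α)) '' ↑T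
      ⊆ {A : Set α | M.Indep A ∧ A.ncard = 2} := by
    rintro _ ⟨⟨⟨i, j⟩, a, b⟩, hq, rfl⟩
    simp only [T, coe_sigma, Set.mem_sigma_iff, coe_filter, mem_univ, true_and,
      Set.mem_ofPred_eq, mem_coe, mem_product] at hq
    refine ⟨hcross i j hq.1.ne a hq.2.1 b hq.2.2, Set.ncard_pair fun hab : a = b => ?_⟩
    exact hq.1.ne (huniq hq.2.1 (hab ▸ hq.2.2))
  calc ∑ p ∈ univ.filter (fun p : ι × ι => p.1 < p.2), #(E p.1) * #(E p.2)
      = (T : Set ((_ : ι × ι) × α × α)).ncard := by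
        rw [Set.ncard_coe_finset, card_sigma]; simp only [card_product]
    _ = _ := hinj.ncard_image.symm
    _ ≤ fNum M 2 := Set.ncard_le_ncard hsub (Set.toFinite _)

end Matroid

theorem stmt11_general {α : Type*} [Fintype α] {t d : ℕ} (hd : 3 ≤ d) (hdt : d ≤ t)
    (M : Matroid α) (E : Fin t → Finset α) (h : ℕ → ℤ)
    (hcover : ∀ a : α, a ∈ M.E ↔ ∃ i, a ∈ E i)
    (hdisj : ∀ i j : Fin t, i ≠ j → Disjoint (E i) (E j))
    (hne : ∀ i, (E i).Nonempty)
    (hpar : ∀ (i j : Fin t) (a b : α), a ∈ E i → b ∈ E j → a ≠ b →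
      (M.Indep {a, b} ↔ i ≠ j))
    (hh : ∀ x : ℝ, ∑ j ∈ Finset.range (d + 1), (h j : ℝ) * x ^ j =
      ∑ i ∈ Finset.range (d + 1), (fNum M i : ℝ) * x ^ i * (1 - x) ^ (d - i))
    :
    fNum M 3 ≤ ∑ p ∈ Finset.univ.filter (fun p : Fin t × Fin t × Fin t => p.1 < p.2.1 ∧ p.2.1 < p.2.2), (E p.1).card * ((E p.2.1).card * (E p.2.2).card) ∧
    h 3 ≤ ((∑ p ∈ Finset.univ.filter (fun p : Fin t × Fin t × Fin t => p.1 < p.2.1 ∧ p.2.1 < p.2.2),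
        ((E p.1).card - 1) * (((E p.2.1).card - 1) * ((E p.2.2).card - 1))) +
      (t - d) * (∑ p ∈ Finset.univ.filter (fun p : Fin t × Fin t => p.1 < p.2), ((E p.1).card - 1) * ((E p.2).card - 1)) +
      Nat.choose (t - d + 1) 2 * (∑ i, ((E i).card - 1)) + Nat.choose (t - d + 2) 3 : ℕ) := by
  have hex : ∀ a, ∃ i : Fin t, a ∈ M.E → a ∈ E i := fun a =>
    (em (a ∈ M.E)).elim (fun ha => ((hcover a).1 ha).imp fun _ hi _ => hi)
      fun ha => ⟨⟨0, by omega⟩, fun ha' => (ha ha').elim⟩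
  choose cls hcls using hex
  have hf3 := fNum_three_le M E cls hcls fun a ha b hb hab =>
    (hpar _ _ a b (hcls a ha) (hcls b hb) hab).1
  refine ⟨hf3, ?_⟩
  have hf2 := le_fNum_two M E (fun i j hij => hdisj i j hij) fun i j hij a ha b hb =>
    (hpar i j a b ha hb fun hab => disjoint_left.1 (hdisj i j hij) ha (hab ▸ hb)).2 hij
  have hf1 := fNum_one_le M E fun a ha => (hcover a).1 ha
  set y : Fin t → ℝ := fun i => ((#(E i) - 1 : ℕ) : ℝ)
  have hy : ∀ i, y i + 1 = #(E i) := fun i => by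
    simp [y, Nat.cast_sub (hne i).card_pos]
  have key := h_three_le hd (by simpa using hdt) h (fNum M) hh y ?_ ?_ ?_ (fNum_zero M)
  · have : (h 3 : ℝ) ≤ _ := key
    rw [← sum_lt_lt_mul_eq_sum_powersetCard_three, ← sum_lt_mul_eq_sum_powersetCard_two] at this
    simp only [Fintype.card_fin, y] at this
    exact_mod_cast this
  · simp_rw [hy, ← sum_lt_lt_mul_eq_sum_powersetCard_three]
    exact_mod_cast hf3
  · simp_rw [hy, ← sum_lt_mul_eq_sum_powersetCard_two]
    exact_mod_cast hf2
  · simp_rw [hy]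
    exact_mod_cast hf1

theorem stmt11 {α : Type*} [Fintype α] {t d : ℕ} (hd : 3 ≤ d) (hdt : d ≤ t)
    (M : Matroid α) (E : Fin t → Finset α) (h : ℕ → ℤ)
    (hloop : ∀ a : α, a ∈ M.E → M.Indep {a})
    (hcover : ∀ a : α, a ∈ M.E ↔ ∃ i, a ∈ E i)
    (hdisj : ∀ i j : Fin t, i ≠ j → Disjoint (E i) (E j))
    (hne : ∀ i, (E i).Nonempty)
    (hground : ∀ (i : Fin t) (a : α), a ∈ E i → a ∈ M.E)
    (hpar : ∀ (i j : Fin t) (a b : α), a ∈ E i → b ∈ E j → a ≠ b →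
      (M.Indep {a, b} ↔ i ≠ j))
    (hrank : ∀ B : Set α, M.IsBase B → B.ncard = d)
    (hh : ∀ x : ℝ, ∑ j ∈ Finset.range (d + 1), (h j : ℝ) * x ^ j =
      ∑ i ∈ Finset.range (d + 1), (fNum M i : ℝ) * x ^ i * (1 - x) ^ (d - i))
    :
    fNum M 3 ≤ ∑ p ∈ Finset.univ.filter (fun p : Fin t × Fin t × Fin t => p.1 < p.2.1 ∧ p.2.1 < p.2.2), (E p.1).card * ((E p.2.1).card * (E p.2.2).card) ∧
    h 3 ≤ ((∑ p ∈ Finset.univ.filter (fun p : Fin t × Fin t × Fin t => p.1 < p.2.1 ∧ p.2.1 < p.2.2),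
        ((E p.1).card - 1) * (((E p.2.1).card - 1) * ((E p.2.2).card - 1))) +
      (t - d) * (∑ p ∈ Finset.univ.filter (fun p : Fin t × Fin t => p.1 < p.2), ((E p.1).card - 1) * ((E p.2).card - 1)) +
      Nat.choose (t - d + 1) 2 * (∑ i, ((E i).card - 1)) + Nat.choose (t - d + 2) 3 : ℕ) :=
  stmt11_general hd hdt M E h hcover hdisj hne hpar hh
end

section
/- Any pure O-sequence (h_0, h_1, ..., h_d) with h_d ≠ 0 satisfies h_0 ≤ h_1 ≤ ... ≤ h_{⌊d/2⌋} and h_i ≤ h_{d-i} for all 0 ≤ i ≤ ⌊d/2⌋. -/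
open Finset

/-!
The divisors of a monomial `M` form a product of chains, which has a symmetric chain
decomposition (de Bruijn). Following the chains, for `i ≤ j` and `i + j ≤ deg M` the divisors of
`M` of degree `i` inject into those of degree `j`, each into a multiple of itself. Giving every
monomial `m` of the order ideal the weight `1 / #{maximal M | m ∣ M}` and transporting weights
along these injections, one maximal monomial at a time, shows `h_i ≤ h_j` whenever `i ≤ j` and
`i + j ≤ d`.
-/

lemma mdeg_add (m n : ℕ →₀ ℕ) : mdeg (m + n) = mdeg m + mdeg n :=
  map_add Finsupp.degree m n

lemma mdeg_single (v b : ℕ) : mdeg (Finsupp.single v b) = b :=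
  Finsupp.degree_single v b

lemma mdeg_mono {m n : ℕ →₀ ℕ} (h : m ≤ n) : mdeg m ≤ mdeg n :=
  Finsupp.degree_mono h

lemma mdeg_eq_mdeg_erase_add (n : ℕ →₀ ℕ) (v : ℕ) : mdeg n = mdeg (n.erase v) + n v := by
  conv_lhs => rw [← Finsupp.erase_add_single v n]
  rw [mdeg_add, mdeg_single]

lemma le_single_add_iff {v b : ℕ} {f n : ℕ →₀ ℕ} (hv : f v = 0) :
    n ≤ Finsupp.single v b + f ↔ n.erase v ≤ f ∧ n v ≤ b := by
  constructor
  · intro h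
    refine ⟨fun w => ?_, by simpa [hv] using h v⟩
    by_cases hw : w = v
    · simp [hw]
    · simpa [Finsupp.erase_ne hw, Finsupp.single_apply, Ne.symm hw] using h w
  · rintro ⟨hf, hb⟩
    rw [← Finsupp.erase_add_single v n, add_comm]
    exact add_le_add (Finsupp.single_le_single.mpr hb) hf

lemma erase_add_single_of_apply_eq_zero {m : ℕ →₀ ℕ} {v : ℕ} (hm : m v = 0) (u : ℕ) :
    (m + Finsupp.single v u).erase v = m := by
  rw [Finsupp.erase_add, Finsupp.erase_single, add_zero,
    Finsupp.erase_of_notMem_support (Finsupp.notMem_support_iff.mpr hm)]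

/-- The fibres of `c` partition the divisors of `M` into chains, the chain labelled `p`
occupying exactly the degrees `a p, a p + 1, …, mdeg M - a p`. -/
structure IsSymmetricChainLabeling {ι : Type*} (M : ℕ →₀ ℕ) (c : (ℕ →₀ ℕ) → ι) (a : ι → ℕ) :
    Prop where
  le_of_mdeg_le ⦃n n' : ℕ →₀ ℕ⦄ : n ≤ M → n' ≤ M → c n = c n' → mdeg n ≤ mdeg n' → n ≤ n'
  start_le_mdeg ⦃n : ℕ →₀ ℕ⦄ : n ≤ M → a (c n) ≤ mdeg n
  mdeg_add_start_le ⦃n : ℕ →₀ ℕ⦄ : n ≤ M → mdeg n + a (c n) ≤ mdeg M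
  exists_mdeg_eq ⦃n : ℕ →₀ ℕ⦄ : n ≤ M → ∀ j, a (c n) ≤ j → j + a (c n) ≤ mdeg M →
    ∃ n' ≤ M, c n' = c n ∧ mdeg n' = j

namespace IsSymmetricChainLabeling

variable {ι : Type*} {M : ℕ →₀ ℕ} {c : (ℕ →₀ ℕ) → ι} {a : ι → ℕ}

lemma zero : IsSymmetricChainLabeling 0 (fun _ => ()) (fun _ => 0) where
  le_of_mdeg_le n n' hn hn' _ _ := by rw [nonpos_iff_eq_zero.mp hn, nonpos_iff_eq_zero.mp hn']
  start_le_mdeg _ _ := Nat.zero_le _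
  mdeg_add_start_le n hn := by rw [nonpos_iff_eq_zero.mp hn, add_zero]
  exists_mdeg_eq _ _ j _ hj := ⟨0, le_rfl, rfl, by simp_all [mdeg]⟩

/-- de Bruijn's product construction: the chain `n₀ < n₁ < ⋯` of `M` labelled `p` and the chain
`0 < x_v < ⋯ < x_v^b` give the chains `(p, s)`, running from `n_s` up to `n_s x_v^(b-s)` and then
along `n_k x_v^(b-s)`, `k > s`. -/
theorem single_add (hc : IsSymmetricChainLabeling M c a) {v : ℕ} (hv : M v = 0) (b : ℕ) :
    IsSymmetricChainLabeling (Finsupp.single v b + M)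
      (fun n => (c (n.erase v), min (mdeg (n.erase v) - a (c (n.erase v))) (b - n v)))
      (fun q => a q.1 + q.2) where
  le_of_mdeg_le n n' hn hn' hcc hdeg := by
    rw [le_single_add_iff hv] at hn hn'
    obtain ⟨hcc, hs⟩ := Prod.mk.inj hcc
    have h := hc.start_le_mdeg hn.1
    have h' := hc.start_le_mdeg hn'.1
    rw [mdeg_eq_mdeg_erase_add n v, mdeg_eq_mdeg_erase_add n' v] at hdeg
    rw [hcc] at hs h
    have hle : mdeg (n.erase v) ≤ mdeg (n'.erase v) ∧ n v ≤ n' v := by omega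
    rw [← Finsupp.erase_add_single v n, ← Finsupp.erase_add_single v n']
    exact add_le_add (hc.le_of_mdeg_le hn.1 hn'.1 hcc hle.1) (Finsupp.single_le_single.mpr hle.2)
  start_le_mdeg n hn := by
    dsimp only
    rw [le_single_add_iff hv] at hn
    have := hc.start_le_mdeg hn.1
    rw [mdeg_eq_mdeg_erase_add n v]
    omega
  mdeg_add_start_le n hn := by
    dsimp only
    rw [le_single_add_iff hv] at hn
    have := hc.mdeg_add_start_le hn.1
    rw [mdeg_eq_mdeg_erase_add n v, mdeg_add, mdeg_single]
    omega
  exists_mdeg_eq n hn j hj hjM := by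
    dsimp only at hj hjM ⊢
    rw [le_single_add_iff hv] at hn
    set m := n.erase v
    set s := min (mdeg m - a (c m)) (b - n v)
    have := hc.start_le_mdeg hn.1
    have := hc.mdeg_add_start_le hn.1
    rw [mdeg_add, mdeg_single] at hjM
    set u := min (j - (a (c m) + s)) (b - s)
    obtain ⟨m', hm'M, hm'c, hm'deg⟩ :=
      hc.exists_mdeg_eq hn.1 (j - u) (by omega) (by omega)
    have hm'v : m' v = 0 := Nat.eq_zero_of_le_zero (hv ▸ hm'M v)
    refine ⟨m' + Finsupp.single v u, ?_, ?_, ?_⟩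
    · rw [le_single_add_iff hv, erase_add_single_of_apply_eq_zero hm'v]
      simp only [Finsupp.add_apply, hm'v, Finsupp.single_eq_same, zero_add]
      exact ⟨hm'M, by omega⟩
    · simp only [erase_add_single_of_apply_eq_zero hm'v, Finsupp.add_apply, hm'v,
        Finsupp.single_eq_same, zero_add, hm'c, hm'deg, Prod.mk.injEq, true_and]
      omega
    · rw [mdeg_add, mdeg_single]
      omega

theorem exists_injOn (hc : IsSymmetricChainLabeling M c a) {i j : ℕ} (hij : i ≤ j)
    (hijM : i + j ≤ mdeg M) :
    ∃ ν : (ℕ →₀ ℕ) → (ℕ →₀ ℕ), (∀ n ≤ M, mdeg n = i → n ≤ ν n ∧ ν n ≤ M ∧ mdeg (ν n) = j) ∧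
      Set.InjOn ν {n | n ≤ M ∧ mdeg n = i} := by
  have hν : ∀ n ≤ M, mdeg n = i → ∃ n' ≤ M, c n' = c n ∧ mdeg n' = j := fun n hn hdeg =>
    have := hc.start_le_mdeg hn
    hc.exists_mdeg_eq hn j (by omega) (by omega)
  choose! ν hνM hνc hνdeg using hν
  refine ⟨ν, fun n hn hdeg => ⟨?_, hνM n hn hdeg, hνdeg n hn hdeg⟩, ?_⟩
  · exact hc.le_of_mdeg_le hn (hνM n hn hdeg) (hνc n hn hdeg).symm
      (by rw [hdeg, hνdeg n hn hdeg]; exact hij)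
  · rintro n ⟨hn, hdeg⟩ n' ⟨hn', hdeg'⟩ hνn
    have hcc : c n = c n' := by rw [← hνc n hn hdeg, hνn, hνc n' hn' hdeg']
    exact le_antisymm (hc.le_of_mdeg_le hn hn' hcc (by omega))
      (hc.le_of_mdeg_le hn' hn hcc.symm (by omega))

end IsSymmetricChainLabeling

theorem exists_isSymmetricChainLabeling (M : ℕ →₀ ℕ) :
    ∃ (ι : Type) (c : (ℕ →₀ ℕ) → ι) (a : ι → ℕ), IsSymmetricChainLabeling M c a := by
  induction M using Finsupp.induction with
  | zero => exact ⟨_, _, _, IsSymmetricChainLabeling.zero⟩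
  | single_add v b M hv _ ih =>
    obtain ⟨ι, c, a, hc⟩ := ih
    exact ⟨_, _, _, hc.single_add (Finsupp.notMem_support_iff.mp hv) b⟩

theorem exists_injOn_mdeg_eq (M : ℕ →₀ ℕ) {i j : ℕ} (hij : i ≤ j) (hijM : i + j ≤ mdeg M) :
    ∃ ν : (ℕ →₀ ℕ) → (ℕ →₀ ℕ), (∀ n ≤ M, mdeg n = i → n ≤ ν n ∧ ν n ≤ M ∧ mdeg (ν n) = j) ∧
      Set.InjOn ν {n | n ≤ M ∧ mdeg n = i} :=
  let ⟨_, _, _, hc⟩ := exists_isSymmetricChainLabeling M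
  hc.exists_injOn hij hijM

theorem Finset.card_le_card_of_forall_exists_injOn {α : Type*} [Preorder α] {A B T : Finset α}
    (hA : ∀ x ∈ A, ∃ t ∈ T, x ≤ t)
    (hν : ∀ t ∈ T, ∃ ν : α → α, (∀ x ∈ A, x ≤ t → x ≤ ν x ∧ ν x ≤ t ∧ ν x ∈ B) ∧
      Set.InjOn ν {x | x ∈ A ∧ x ≤ t}) :
    #A ≤ #B := by
  classical
  set w : α → ℚ := fun x => (#{t ∈ T | x ≤ t} : ℚ)⁻¹
  have hw_nonneg : ∀ x, 0 ≤ w x := fun x => inv_nonneg.mpr (Nat.cast_nonneg _)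
  have hw_sum : ∀ x, ∑ t ∈ T with x ≤ t, w x = if (T.filter (x ≤ ·)).Nonempty then 1 else 0 := by
    intro x
    rw [sum_const, nsmul_eq_mul]
    split_ifs with hx
    · exact mul_inv_cancel₀ (Nat.cast_ne_zero.mpr hx.card_pos.ne')
    · rw [not_nonempty_iff_eq_empty.mp hx, card_empty, Nat.cast_zero, zero_mul]
  have hlocal : ∀ t ∈ T, ∑ x ∈ A with x ≤ t, w x ≤ ∑ y ∈ B with y ≤ t, w y := by
    intro t ht
    obtain ⟨ν, hνB, hνinj⟩ := hν t ht
    have hνB' : ∀ x ∈ A.filter (· ≤ t), x ≤ ν x ∧ ν x ≤ t ∧ ν x ∈ B := fun x hx =>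
      hνB x (mem_filter.mp hx).1 (mem_filter.mp hx).2
    calc ∑ x ∈ A with x ≤ t, w x ≤ ∑ x ∈ A with x ≤ t, w (ν x) := by
          refine sum_le_sum fun x hx => inv_anti₀ ?_ ?_
          · exact_mod_cast card_pos.mpr ⟨t, mem_filter.mpr ⟨ht, (hνB' x hx).2.1⟩⟩
          · exact_mod_cast card_le_card fun s hs => by
              simp only [mem_filter] at hs ⊢
              exact ⟨hs.1, (hνB' x hx).1.trans hs.2⟩
      _ = ∑ y ∈ (A.filter (· ≤ t)).image ν, w y :=
          (sum_image fun x hx y hy => hνinj (by simpa using hx) (by simpa using hy)).symm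
      _ ≤ ∑ y ∈ B with y ≤ t, w y := by
          refine sum_le_sum_of_subset_of_nonneg (fun y hy => ?_) fun y _ _ => hw_nonneg y
          obtain ⟨x, hx, rfl⟩ := mem_image.mp hy
          exact mem_filter.mpr ⟨(hνB' x hx).2.2, (hνB' x hx).2.1⟩
  have hswap : ∀ S : Finset α,
      ∑ x ∈ S, ∑ t ∈ T with x ≤ t, w x = ∑ t ∈ T, ∑ x ∈ S with x ≤ t, w x :=
    fun S => sum_comm' fun x t => by simp only [mem_filter]; tauto
  have hcard : (#A : ℚ) ≤ #B := calc
    (#A : ℚ) = ∑ x ∈ A, ∑ t ∈ T with x ≤ t, w x := by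
        rw [card_eq_sum_ones, Nat.cast_sum]
        refine sum_congr rfl fun x hx => ?_
        obtain ⟨t, ht, hxt⟩ := hA x hx
        rw [hw_sum, if_pos ⟨t, mem_filter.mpr ⟨ht, hxt⟩⟩, Nat.cast_one]
    _ ≤ ∑ y ∈ B, ∑ t ∈ T with y ≤ t, w y := by
        rw [hswap, hswap]; exact sum_le_sum hlocal
    _ ≤ #B := by
        rw [card_eq_sum_ones, Nat.cast_sum]
        refine sum_le_sum fun y _ => ?_
        rw [hw_sum]; split_ifs <;> norm_num
  exact_mod_cast hcard

lemma Set.Finite.exists_le_forall_le_imp_eq {α : Type*} [PartialOrder α] {O : Set α}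
    (hfin : O.Finite) {m : α} (hm : m ∈ O) : ∃ t ∈ O, m ≤ t ∧ ∀ n ∈ O, t ≤ n → n = t := by
  obtain ⟨t, hmt, ht⟩ := hfin.exists_le_maximal hm
  exact ⟨t, ht.prop, hmt, fun n hn htn => le_antisymm (ht.2 hn htn) htn⟩

theorem IsOrderIdeal.ncard_mdeg_eq_le {O : Set (ℕ →₀ ℕ)} (hO : IsOrderIdeal O) (hfin : O.Finite)
    {D : ℕ} (hpure : ∀ m ∈ O, (∀ n ∈ O, m ≤ n → n = m) → mdeg m = D) {i j : ℕ} (hij : i ≤ j)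
    (hijD : i + j ≤ D) :
    ({m ∈ O | mdeg m = i}).ncard ≤ ({m ∈ O | mdeg m = j}).ncard := by
  classical
  have hlevel : ∀ k, {m ∈ O | mdeg m = k} = ↑(hfin.toFinset.filter (mdeg · = k)) := fun k => by
    ext; simp
  rw [hlevel, hlevel, Set.ncard_coe_finset, Set.ncard_coe_finset]
  refine card_le_card_of_forall_exists_injOn (T := hfin.toFinset.filter
    fun t => ∀ n ∈ O, t ≤ n → n = t) (fun x hx => ?_) (fun t ht => ?_)
  · obtain ⟨t, htO, hxt, ht⟩ := hfin.exists_le_forall_le_imp_eq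
      (hfin.mem_toFinset.mp (mem_filter.mp hx).1)
    exact ⟨t, by simpa using ⟨htO, ht⟩, hxt⟩
  · simp only [mem_filter, Set.Finite.mem_toFinset] at ht
    obtain ⟨ν, hν, hνinj⟩ := exists_injOn_mdeg_eq t hij (hpure t ht.1 ht.2 ▸ hijD)
    refine ⟨ν, fun x hx hxt => ?_, fun x hx y hy => hνinj ⟨hx.2, ?_⟩ ⟨hy.2, ?_⟩⟩
    · simp only [mem_filter, Set.Finite.mem_toFinset] at hx ⊢
      obtain ⟨hxν, hνt, hνdeg⟩ := hν x hxt hx.2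
      exact ⟨hxν, hνt, hO t ht.1 _ hνt, hνdeg⟩
    · exact (mem_filter.mp hx.1).2
    · exact (mem_filter.mp hy.1).2

theorem stmt17_general (h : ℕ → ℤ) (d : ℕ) (hp : IsPureOSeq h) (hd : h d ≠ 0) :
    (∀ i j : ℕ, i ≤ j → j ≤ d / 2 → h i ≤ h j) ∧
    (∀ i : ℕ, i ≤ d / 2 → h i ≤ h (d - i)) := by
  obtain ⟨O, hfin, -, hO, ⟨D, hpure⟩, hcount⟩ := hp
  have hdD : d ≤ D := by
    obtain ⟨m, hmO, hmd⟩ : ∃ m ∈ O, mdeg m = d := by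
      by_contra! hno
      exact hd (by simp [hcount, Set.sep_eq_empty_iff_mem_false.mpr hno])
    obtain ⟨t, htO, hmt, ht⟩ := hfin.exists_le_forall_le_imp_eq hmO
    calc d = mdeg m := hmd.symm
      _ ≤ mdeg t := mdeg_mono hmt
      _ = D := hpure t htO ht
  have hmono : ∀ i j, i ≤ j → i + j ≤ d → h i ≤ h j := fun i j hij hijd => by
    rw [hcount, hcount]
    exact_mod_cast hO.ncard_mdeg_eq_le hfin hpure hij (hijd.trans hdD)
  exact ⟨fun i j hij hj => hmono i j hij (by omega),
    fun i hi => hmono i (d - i) (by omega) (by omega)⟩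

theorem stmt17 (h : ℕ → ℤ) (d : ℕ) (hp : IsPureOSeq h)
    (htop : ∀ j : ℕ, d < j → h j = 0) (hd : h d ≠ 0) :
    (∀ i j : ℕ, i ≤ j → j ≤ d / 2 → h i ≤ h j) ∧
    (∀ i : ℕ, i ≤ d / 2 → h i ≤ h (d - i)) :=
  stmt17_general h d hp hd
end
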